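/- arXiv:1905.02482 — 9 statements merged into one kernel-verified Lean document; each statement's English description precedes it below -/
import Mathlib

section
/- (Plotkin-like bound) Let C be an [n,k] linear code over F_p, where p is an odd prime. Then for every 1 ≤ r ≤ k, d_r(C) ≤ ⌊ n(p^r − 1)p^{k−r} / (p^k − 1) ⌋. -/
open scoped Classical

/-- The `r`-th generalized Hamming weight of a linear code `C ⊆ F_p^ι`:
the minimum cardinality of the support of an `r`-dimensional subcode of `C`.
The support of a subcode `U` is the set of coordinates `i` such that `x i ≠ 0`
for some `x ∈ U`. -/
noncomputable def ghw {ι : Type*} [Fintype ι] (p : ℕ)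
    (C : Submodule (ZMod p) (ι → ZMod p)) (r : ℕ) : ℕ :=
  sInf {w : ℕ | ∃ U : Submodule (ZMod p) (ι → ZMod p), U ≤ C ∧
    Module.finrank (ZMod p) U = r ∧
    (Finset.univ.filter fun i : ι => ∃ x ∈ U, x i ≠ 0).card = w}

/-!
Average the support size over all linearly independent `r`-tuples `s` of codewords: the span of
`s` is an `r`-dimensional subcode whose support is the set of coordinates `i` with `s j i ≠ 0` for
some `j`. For a fixed coordinate `i`, the tuples with every `s j i = 0` are the independent tuples
of the kernel of the `i`-th coordinate functional, which has dimension at least `k - 1`. Writing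
`N_m = ∏_{j<r} (p^m - p^j)` for the number of independent `r`-tuples in dimension `m`, each
coordinate is thus counted for at most `N_k - N_{k-1}` tuples, so `N_k d_r ≤ n (N_k - N_{k-1})`;
the identity `N_{k-1} (p^k - 1) = N_k (p^{k-r} - 1)` turns this into the bound.
-/

open Finset Module

def indepTupleCount (q m r : ℕ) : ℕ := ∏ j ∈ range r, (q ^ m - q ^ j)

namespace indepTupleCount

theorem pos {q m r : ℕ} (hq : 1 < q) (hr : r ≤ m) : 0 < indepTupleCount q m r :=
  prod_pos fun j hj => Nat.sub_pos_of_lt (Nat.pow_lt_pow_right hq (by simp at hj; omega))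

theorem mono {q m m' : ℕ} (hq : 0 < q) (h : m ≤ m') (r : ℕ) :
    indepTupleCount q m r ≤ indepTupleCount q m' r :=
  prod_le_prod' fun _ _ => Nat.sub_le_sub_right (Nat.pow_le_pow_right hq h) _

theorem mul_pow_sub_one {q m r : ℕ} (hr : r ≤ m) :
    indepTupleCount q (m - 1) r * (q ^ m - 1) = indepTupleCount q m r * (q ^ (m - r) - 1) := by
  induction r with
  | zero => simp [indepTupleCount]
  | succ r ih =>
    obtain ⟨a, rfl⟩ : ∃ a, m = r + a + 1 := ⟨m - r - 1, by omega⟩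
    have pow_add_sub_pow (b : ℕ) : q ^ (r + b) - q ^ r = q ^ r * (q ^ b - 1) := by
      rw [pow_add, Nat.mul_sub_one]
    simp only [indepTupleCount, prod_range_succ] at ih ⊢
    rw [mul_right_comm, ih (by omega), show r + a + 1 - 1 = r + a by omega,
      show r + a + 1 - r = a + 1 by omega, show r + a + 1 - (r + 1) = a by omega,
      pow_add_sub_pow, add_assoc, pow_add_sub_pow]
    ring

theorem mul_pow_sub_one_le_of_mul_le {q m r g n : ℕ} (hq : 1 < q) (hr : r ≤ m)
    (h : indepTupleCount q m r * g ≤ n * (indepTupleCount q m r - indepTupleCount q (m - 1) r)) :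
    g * (q ^ m - 1) ≤ n * (q ^ r - 1) * q ^ (m - r) := by
  set N := indepTupleCount q m r
  have hN : 0 < N := pos hq hr
  refine le_of_mul_le_mul_left ?_ hN
  calc N * (g * (q ^ m - 1)) = N * g * (q ^ m - 1) := by ring
    _ ≤ n * (N - indepTupleCount q (m - 1) r) * (q ^ m - 1) := Nat.mul_le_mul_right _ h
    _ = n * (N * (q ^ m - 1) - N * (q ^ (m - r) - 1)) := by
        rw [mul_assoc, Nat.sub_mul, mul_pow_sub_one hr]
    _ = N * (n * (q ^ r - 1) * q ^ (m - r)) := by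
        rw [← Nat.mul_sub, Nat.sub_sub_sub_cancel_right (Nat.one_le_pow _ _ (by omega)),
          mul_assoc n, Nat.sub_one_mul, ← pow_add, Nat.add_sub_cancel' hr]
        ring

end indepTupleCount

theorem LinearMap.finrank_sub_one_le_finrank_ker {K V : Type*} [Field K] [AddCommGroup V]
    [Module K V] [FiniteDimensional K V] (φ : V →ₗ[K] K) :
    finrank K V - 1 ≤ finrank K (LinearMap.ker φ) := by
  have := φ.finrank_range_add_finrank_ker
  have := (LinearMap.range φ).finrank_le
  simp only [finrank_self] at this
  omega

theorem card_linearIndependent_forall_mem {R M : Type*} [Semiring R] [AddCommMonoid M]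
    [Module R M] [Fintype M] (W : Submodule R M) (r : ℕ) :
    #{s : Fin r → M | LinearIndependent R s ∧ ∀ j, s j ∈ W} =
      #{t : Fin r → W | LinearIndependent R t} := by
  have hW (t : Fin r → W) :=
    W.subtype.linearIndependent_iff_of_injOn (v := t) W.subtype_injective.injOn
  symm
  refine card_bij (fun t _ => W.subtype ∘ t) (fun t ht => ?_) (fun t _ t' _ h => ?_)
    fun s hs => ?_
  · simp only [mem_filter, mem_univ, true_and] at ht ⊢
    exact ⟨(hW t).2 ht, fun j => (t j).2⟩
  · exact W.subtype_injective.comp_left h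
  · simp only [mem_filter, mem_univ, true_and] at hs
    exact ⟨fun j => ⟨s j, hs.2 j⟩, mem_filter.2 ⟨mem_univ _, (hW _).1 hs.1⟩, rfl⟩

section IndependentTuples

variable {K V : Type*} [Field K] [Fintype K] [AddCommGroup V] [Module K V] [Fintype V]

theorem card_linearIndependent_eq_indepTupleCount (r : ℕ) :
    #{s : Fin r → V | LinearIndependent K s} =
      indepTupleCount (Fintype.card K) (finrank K V) r := by
  rcases le_or_gt r (finrank K V) with hr | hr
  · rw [← Fintype.card_subtype, ← Nat.card_eq_fintype_card, card_linearIndependent hr]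
    exact Fin.prod_univ_eq_prod_range (Fintype.card K ^ finrank K V - Fintype.card K ^ ·) r
  · rw [filter_false_of_mem fun s _ hs => by simpa using hs.fintype_card_le_finrank.trans_lt hr,
      card_empty, indepTupleCount, prod_eq_zero (mem_range.2 hr) (by simp)]

theorem card_linearIndependent_exists_ne_zero_le (φ : V →ₗ[K] K) (r : ℕ) :
    #{s : Fin r → V | LinearIndependent K s ∧ ∃ j, φ (s j) ≠ 0} ≤
      indepTupleCount (Fintype.card K) (finrank K V) r -
        indepTupleCount (Fintype.card K) (finrank K V - 1) r := by
  have hsplit := card_filter_add_card_filter_not (s := {s : Fin r → V | LinearIndependent K s})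
    (fun s => ∀ j, s j ∈ LinearMap.ker φ)
  have hker := indepTupleCount.mono (Fintype.card_pos (α := K)) φ.finrank_sub_one_le_finrank_ker r
  rw [← card_linearIndependent_eq_indepTupleCount, ← card_linearIndependent_forall_mem] at hker
  simp only [filter_filter, LinearMap.mem_ker, not_forall, ← ne_eq] at hsplit hker
  rw [card_linearIndependent_eq_indepTupleCount] at hsplit
  omega

theorem sum_card_exists_ne_zero_le {ι : Type*} [Fintype ι] (φ : ι → V →ₗ[K] K) (r : ℕ) :
    ∑ s ∈ {s : Fin r → V | LinearIndependent K s}, #{i | ∃ j, φ i (s j) ≠ 0} ≤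
      Fintype.card ι * (indepTupleCount (Fintype.card K) (finrank K V) r -
        indepTupleCount (Fintype.card K) (finrank K V - 1) r) := by
  calc _ = ∑ i, #{s : Fin r → V | LinearIndependent K s ∧ ∃ j, φ i (s j) ≠ 0} := by
        simp_rw [← filter_filter]
        exact sum_card_bipartiteAbove_eq_sum_card_bipartiteBelow
          (fun (s : Fin r → V) i => ∃ j, φ i (s j) ≠ 0)
    _ ≤ _ := by
      simpa using sum_le_sum fun i (_ : i ∈ univ) =>
        card_linearIndependent_exists_ne_zero_le (φ i) r

end IndependentTuples

theorem exists_mem_span_range_apply_ne_zero_iff {R ι κ : Type*} [Semiring R] (s : κ → ι → R)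
    (i : ι) : (∃ x ∈ Submodule.span R (Set.range s), x i ≠ 0) ↔ ∃ j, s j i ≠ 0 := by
  refine ⟨fun ⟨x, hx, hxi⟩ => ?_,
    fun ⟨j, hj⟩ => ⟨s j, Submodule.subset_span ⟨j, rfl⟩, hj⟩⟩
  by_contra! h
  have : Submodule.span R (Set.range s) ≤ LinearMap.ker (LinearMap.proj i) :=
    Submodule.span_le.2 (Set.range_subset_iff.2 h)
  exact hxi (this hx)

theorem ghw_le_card_support {ι : Type*} [Fintype ι] {p : ℕ} [Fact (1 < p)]
    {C : Submodule (ZMod p) (ι → ZMod p)} {r : ℕ} {s : Fin r → ι → ZMod p}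
    (hs : LinearIndependent (ZMod p) s) (hsC : ∀ j, s j ∈ C) :
    ghw p C r ≤ #{i | ∃ j, s j i ≠ 0} := by
  refine Nat.sInf_le ⟨Submodule.span (ZMod p) (Set.range s),
    Submodule.span_le.2 (Set.range_subset_iff.2 hsC),
    by rw [finrank_span_eq_card hs, Fintype.card_fin], ?_⟩
  simp only [exists_mem_span_range_apply_ne_zero_iff]

theorem plotkin_like_bound_general (p n k : ℕ) (hp : p.Prime)
    (C : Submodule (ZMod p) (Fin n → ZMod p))
    (hk : Module.finrank (ZMod p) C = k)
    (r : ℕ) (hr1 : 1 ≤ r) (hr2 : r ≤ k) :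
    ghw p C r ≤ n * (p ^ r - 1) * p ^ (k - r) / (p ^ k - 1) := by
  have := Fact.mk hp
  have := Fact.mk hp.one_lt
  set N := indepTupleCount p k r
  set T : Finset (Fin r → C) := {s | LinearIndependent (ZMod p) s}
  have hT : #T = N := by rw [card_linearIndependent_eq_indepTupleCount, ZMod.card, hk]
  have hweight (s) (hs : s ∈ T) : ghw p C r ≤ #{i | ∃ j, (s j : Fin n → ZMod p) i ≠ 0} :=
    ghw_le_card_support ((mem_filter.1 hs).2.map' C.subtype C.ker_subtype) fun j => (s j).2
  have haverage : N * ghw p C r ≤ n * (N - indepTupleCount p (k - 1) r) := calc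
    N * ghw p C r = ∑ s ∈ T, ghw p C r := by rw [sum_const, hT, smul_eq_mul]
    _ ≤ ∑ s ∈ T, #{i | ∃ j, (s j : Fin n → ZMod p) i ≠ 0} := sum_le_sum hweight
    _ ≤ n * (N - indepTupleCount p (k - 1) r) := by
      convert sum_card_exists_ne_zero_le (fun i => (LinearMap.proj i).comp C.subtype) r using 4
        <;> simp [hk]
  rw [Nat.le_div_iff_mul_le (Nat.sub_pos_of_lt (Nat.one_lt_pow (by omega) hp.one_lt))]
  exact indepTupleCount.mul_pow_sub_one_le_of_mul_le hp.one_lt hr2 haverage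

/-- Plotkin-like bound: for an `[n,k]` linear code `C` over `F_p`
and `1 ≤ r ≤ k`, we have `d_r(C) ≤ ⌊n (p^r - 1) p^{k-r} / (p^k - 1)⌋`. -/
theorem plotkin_like_bound (p n k : ℕ) (hp : p.Prime) (hodd : Odd p)
    (C : Submodule (ZMod p) (Fin n → ZMod p))
    (hk : Module.finrank (ZMod p) C = k)
    (r : ℕ) (hr1 : 1 ≤ r) (hr2 : r ≤ k) :
    ghw p C r ≤ n * (p ^ r - 1) * p ^ (k - r) / (p ^ k - 1) :=
  plotkin_like_bound_general p n k hp C hk r hr1 hr2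
end

section
/- (Griesmer-like bound) Let C be an [n,k] linear code over F_p, where p is an odd prime. Then for every 1 ≤ r ≤ k, d_r(C) ≥ Σ_{i=0}^{r−1} ⌈ d_1(C)/p^i ⌉. -/
open scoped Classical
set_option synthInstance.maxHeartbeats 1000000
set_option maxHeartbeats 1000000

section Aux

variable {p n : ℕ} [Fact p.Prime]

/-- The weight (support) of a vector, as a finset. -/
noncomputable def wtF (x : Fin n → ZMod p) : Finset (Fin n) := Finset.univ.filter fun i => x i ≠ 0

/-- The support of a subcode, as a finset. -/
noncomputable def supF (U : Submodule (ZMod p) (Fin n → ZMod p)) : Finset (Fin n) :=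
  Finset.univ.filter fun i => ∃ x ∈ U, x i ≠ 0

/-- Masking linear map: zero out the coordinates in the support of `x`. -/
noncomputable def maskMap (x : Fin n → ZMod p) : (Fin n → ZMod p) →ₗ[ZMod p] (Fin n → ZMod p) where
  toFun z := fun i => if x i = 0 then z i else 0
  map_add' a b := by funext i; dsimp; split <;> simp
  map_smul' c a := by funext i; dsimp; split <;> simp

lemma maskMap_apply (x z : Fin n → ZMod p) (i : Fin n) :
    maskMap x z i = if x i = 0 then z i else 0 := rfl

lemma maskMap_self (x : Fin n → ZMod p) : maskMap x x = 0 := by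
  funext i; rw [maskMap_apply]; split <;> simp [*]

/-- fiber count: coordinates in the support of `x` where `z` agrees with `c • x`. -/
noncomputable def fib (x z : Fin n → ZMod p) (c : ZMod p) : Finset (Fin n) :=
  (wtF x).filter fun i => z i = c * x i

lemma sum_fib (x z : Fin n → ZMod p) :
    ∑ c : ZMod p, (fib x z c).card = (wtF x).card := by
  rw [Finset.card_eq_sum_card_fiberwise (f := fun i => z i * (x i)⁻¹)
    (t := Finset.univ) (fun i _ => Finset.mem_univ _)]
  refine Finset.sum_congr rfl fun c _ => ?_
  congr 1
  apply Finset.filter_congr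
  intro i hi
  have hx : x i ≠ 0 := by simpa [wtF] using hi
  constructor
  · intro h
    rw [h]; field_simp
  · intro h
    rw [← h]; field_simp

lemma exists_fib_large (x z : Fin n → ZMod p) :
    ∃ c : ZMod p, (wtF x).card ≤ p * (fib x z c).card := by
  obtain ⟨c, -, hc⟩ := Finset.exists_max_image Finset.univ (fun c : ZMod p => (fib x z c).card)
    ⟨0, Finset.mem_univ _⟩
  refine ⟨c, ?_⟩
  calc (wtF x).card = ∑ c : ZMod p, (fib x z c).card := (sum_fib x z).symm
    _ ≤ Finset.univ.card • (fib x z c).card :=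
        Finset.sum_le_card_nsmul _ _ _ fun b _ => hc b (Finset.mem_univ _)
    _ = p * (fib x z c).card := by simp [ZMod.card]

lemma mem_wtF {x : Fin n → ZMod p} {i : Fin n} : i ∈ wtF x ↔ x i ≠ 0 := by simp [wtF]

lemma mem_supF {U : Submodule (ZMod p) (Fin n → ZMod p)} {i : Fin n} :
    i ∈ supF U ↔ ∃ x ∈ U, x i ≠ 0 := by simp [supF]

lemma wtF_pos {x : Fin n → ZMod p} (hx : x ≠ 0) : 0 < (wtF x).card := by
  rw [Finset.card_pos]
  obtain ⟨i, hi⟩ := Function.ne_iff.1 hx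
  exact ⟨i, mem_wtF.2 (by simpa using hi)⟩

lemma mask_ker {U : Submodule (ZMod p) (Fin n → ZMod p)} {x : Fin n → ZMod p}
    (hxU : x ∈ U) (hx : x ≠ 0)
    (hmin : ∀ y ∈ U, y ≠ 0 → (wtF x).card ≤ (wtF y).card)
    {z : Fin n → ZMod p} (hzU : z ∈ U) (hz : maskMap x z = 0) :
    z ∈ Submodule.span (ZMod p) {x} := by
  by_contra hns
  obtain ⟨c, hc⟩ := exists_fib_large x z
  have hcpos : 0 < (fib x z c).card := by
    rcases Nat.eq_zero_or_pos (fib x z c).card with h | h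
    · rw [h, Nat.mul_zero] at hc
      exact absurd (Nat.le_antisymm hc (Nat.zero_le _)) (wtF_pos hx).ne'
    · exact h
  set w := z - c • x with hw
  have hwU : w ∈ U := U.sub_mem hzU (U.smul_mem c hxU)
  have hwne : w ≠ 0 := by
    intro h
    exact hns (Submodule.mem_span_singleton.2 ⟨c, by rw [eq_comm, ← sub_eq_zero]; exact h.symm ▸ rfl⟩)
  have hsub : wtF w ⊆ wtF x \ fib x z c := by
    intro i hi
    have hwi : w i ≠ 0 := mem_wtF.1 hi
    have hwi' : w i = z i - c * x i := rfl
    have hxi : x i ≠ 0 := by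
      intro h0
      have hzi : z i = 0 := by
        have h1 := congrFun hz i
        rw [maskMap_apply] at h1
        simpa [h0] using h1
      exact hwi (by rw [hwi', hzi, h0]; ring)
    refine Finset.mem_sdiff.2 ⟨mem_wtF.2 hxi, fun hfib => ?_⟩
    have h2 : z i = c * x i := (Finset.mem_filter.1 hfib).2
    exact hwi (by rw [hwi', h2]; ring)
  have h3 := hmin w hwU hwne
  have h4 : (wtF w).card ≤ (wtF x).card - (fib x z c).card :=
    (Finset.card_le_card hsub).trans_eq (Finset.card_sdiff_of_subset (Finset.filter_subset _ _))
  have h5 : (fib x z c).card ≤ (wtF x).card := Finset.card_le_card (Finset.filter_subset _ _)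
  omega

lemma mask_wt {U : Submodule (ZMod p) (Fin n → ZMod p)} {x : Fin n → ZMod p}
    (hxU : x ∈ U) (hx : x ≠ 0)
    (hmin : ∀ y ∈ U, y ≠ 0 → (wtF x).card ≤ (wtF y).card)
    {z : Fin n → ZMod p} (hzU : z ∈ U) (hz : maskMap x z ≠ 0) :
    (wtF x).card ⌈/⌉ p ≤ (wtF (maskMap x z)).card := by
  obtain ⟨c, hc⟩ := exists_fib_large x z
  set y := maskMap x z with hy
  set w := z - c • x with hw
  have hwU : w ∈ U := U.sub_mem hzU (U.smul_mem c hxU)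
  have hmw : maskMap x w = y := by
    rw [hw, map_sub, map_smul, maskMap_self, smul_zero, sub_zero]
  have hwne : w ≠ 0 := by
    intro h
    rw [h, map_zero] at hmw
    exact hz hmw.symm
  have hmin' := hmin w hwU hwne
  have hsub : wtF w ⊆ wtF y ∪ (wtF x \ fib x z c) := by
    intro i hi
    have hwi : w i ≠ 0 := mem_wtF.1 hi
    have hwi' : w i = z i - c * x i := rfl
    by_cases hxi : x i = 0
    · refine Finset.mem_union_left _ (mem_wtF.2 ?_)
      have : y i = z i := by rw [hy, maskMap_apply, if_pos hxi]
      rw [this]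
      intro h0
      exact hwi (by rw [hwi', h0, hxi]; ring)
    · refine Finset.mem_union_right _ (Finset.mem_sdiff.2 ⟨mem_wtF.2 hxi, fun hfib => ?_⟩)
      have h2 : z i = c * x i := (Finset.mem_filter.1 hfib).2
      exact hwi (by rw [hwi', h2]; ring)
  have h4 : (wtF w).card ≤ (wtF y).card + ((wtF x).card - (fib x z c).card) := by
    calc (wtF w).card ≤ (wtF y ∪ (wtF x \ fib x z c)).card := Finset.card_le_card hsub
      _ ≤ (wtF y).card + (wtF x \ fib x z c).card := Finset.card_union_le _ _
      _ = (wtF y).card + ((wtF x).card - (fib x z c).card) := by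
          have hss : fib x z c ⊆ wtF x := Finset.filter_subset _ _
          rw [Finset.card_sdiff_of_subset hss]
  have h5 : (fib x z c).card ≤ (wtF x).card := Finset.card_le_card (Finset.filter_subset _ _)
  have h6 : (wtF x).card ⌈/⌉ p ≤ (fib x z c).card := by
    rw [ceilDiv_le_iff_le_mul (Nat.pos_of_ne_zero (Fact.out (p := p.Prime)).pos.ne')]
    exact hc
  omega

lemma ceilDiv_ceilDiv' (a b c : ℕ) (hb : 0 < b) (hc : 0 < c) :
    a ⌈/⌉ b ⌈/⌉ c = a ⌈/⌉ (b * c) := by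
  refine eq_of_forall_ge_iff fun m => ?_
  rw [ceilDiv_le_iff_le_mul hc, ceilDiv_le_iff_le_mul hb,
    ceilDiv_le_iff_le_mul (Nat.mul_pos hb hc), mul_assoc]

lemma ceilDiv_le_ceilDiv' {a a' b : ℕ} (hb : 0 < b) (h : a ≤ a') : a ⌈/⌉ b ≤ a' ⌈/⌉ b := by
  rw [ceilDiv_le_iff_le_mul hb]
  have := le_smul_ceilDiv (b := a') hb
  simpa [smul_eq_mul] using h.trans this

lemma griesmer_core (r : ℕ) : ∀ (U : Submodule (ZMod p) (Fin n → ZMod p)) (d : ℕ),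
    Module.finrank (ZMod p) U = r →
    (∀ x ∈ U, x ≠ 0 → d ≤ (wtF x).card) →
    ∑ i ∈ Finset.range r, d ⌈/⌉ p ^ i ≤ (supF U).card := by
  induction r with
  | zero => intro U d _ _; simp
  | succ r ih =>
    intro U d hU hd
    have hppos : 0 < p := (Fact.out (p := p.Prime)).pos
    have hUne : ∃ x ∈ U, x ≠ 0 := by
      rw [← Submodule.ne_bot_iff]
      intro h
      rw [h, finrank_bot] at hU
      omega
    set s : Set ℕ := {w | ∃ y ∈ U, y ≠ 0 ∧ (wtF y).card = w} with hs
    have hsne : s.Nonempty := by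
      obtain ⟨x, hx1, hx2⟩ := hUne
      exact ⟨(wtF x).card, x, hx1, hx2, rfl⟩
    obtain ⟨x, hxU, hxne, hxw⟩ := Nat.sInf_mem hsne
    have hmin : ∀ y ∈ U, y ≠ 0 → (wtF x).card ≤ (wtF y).card := fun y hy hyne => by
      rw [hxw]; exact Nat.sInf_le ⟨y, hy, hyne, rfl⟩
    have hdx : d ≤ (wtF x).card := hd x hxU hxne
    set U' := U.map (maskMap x) with hU'def
    set f := (maskMap x).comp U.subtype with hf
    have hrange : LinearMap.range f = U' := by
      rw [hf, LinearMap.range_comp, Submodule.range_subtype]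
    have hkermap : (LinearMap.ker f).map U.subtype = Submodule.span (ZMod p) {x} := by
      apply le_antisymm
      · intro y hy
        obtain ⟨v, hv, rfl⟩ := Submodule.mem_map.1 hy
        exact mask_ker hxU hxne hmin v.2 (LinearMap.mem_ker.1 hv)
      · intro y hy
        obtain ⟨c, rfl⟩ := Submodule.mem_span_singleton.1 hy
        refine Submodule.mem_map.2 ⟨⟨c • x, U.smul_mem c hxU⟩, ?_, rfl⟩
        show maskMap x (c • x) = 0
        rw [map_smul, maskMap_self, smul_zero]
    have hker1 : Module.finrank (ZMod p) (LinearMap.ker f) = 1 := by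
      rw [← Submodule.finrank_map_subtype_eq U (LinearMap.ker f), hkermap,
        finrank_span_singleton hxne]
    have hrk := LinearMap.finrank_range_add_finrank_ker f
    rw [hrange, hker1, hU] at hrk
    have hU'r : Module.finrank (ZMod p) U' = r := by omega
    have hmin' : ∀ y ∈ U', y ≠ 0 → d ⌈/⌉ p ≤ (wtF y).card := by
      intro y hy hyne
      obtain ⟨z, hzU, rfl⟩ := Submodule.mem_map.1 hy
      exact (ceilDiv_le_ceilDiv' hppos hdx).trans (mask_wt hxU hxne hmin hzU hyne)
    have hIH := ih U' (d ⌈/⌉ p) hU'r hmin'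
    have hsub1 : wtF x ⊆ supF U := fun i hi => mem_supF.2 ⟨x, hxU, mem_wtF.1 hi⟩
    have hsub2 : supF U' ⊆ supF U := by
      intro i hi
      obtain ⟨y, hyU', hyi⟩ := mem_supF.1 hi
      obtain ⟨z, hzU, rfl⟩ := Submodule.mem_map.1 hyU'
      refine mem_supF.2 ⟨z, hzU, fun h0 => hyi ?_⟩
      rw [maskMap_apply]
      split <;> simp [h0]
    have hdisj : Disjoint (wtF x) (supF U') := by
      rw [Finset.disjoint_left]
      intro i hi1 hi2
      obtain ⟨y, hyU', hyi⟩ := mem_supF.1 hi2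
      obtain ⟨z, hzU, rfl⟩ := Submodule.mem_map.1 hyU'
      exact hyi (by rw [maskMap_apply, if_neg (mem_wtF.1 hi1)])
    have hcard : (wtF x).card + (supF U').card ≤ (supF U).card := by
      rw [← Finset.card_union_of_disjoint hdisj]
      exact Finset.card_le_card (Finset.union_subset hsub1 hsub2)
    calc ∑ i ∈ Finset.range (r + 1), d ⌈/⌉ p ^ i
        = (∑ i ∈ Finset.range r, d ⌈/⌉ p ^ (i + 1)) + d ⌈/⌉ p ^ 0 :=
          Finset.sum_range_succ' _ r
      _ = (∑ i ∈ Finset.range r, (d ⌈/⌉ p) ⌈/⌉ p ^ i) + d := by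
          rw [pow_zero, ceilDiv_one]
          congr 1
          refine Finset.sum_congr rfl fun i _ => ?_
          rw [ceilDiv_ceilDiv' _ _ _ hppos (pow_pos hppos i), ← pow_succ']
      _ ≤ (supF U').card + (wtF x).card := add_le_add hIH hdx
      _ ≤ (supF U).card := by omega

lemma exists_subcode (C : Submodule (ZMod p) (Fin n → ZMod p)) (r : ℕ)
    (hr : r ≤ Module.finrank (ZMod p) C) :
    ∃ U : Submodule (ZMod p) (Fin n → ZMod p), U ≤ C ∧ Module.finrank (ZMod p) U = r := by
  have b := Module.finBasis (ZMod p) C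
  set v : Fin r → (Fin n → ZMod p) := fun i => (b (Fin.castLE hr i) : Fin n → ZMod p) with hv
  have hli : LinearIndependent (ZMod p) v := by
    have h1 : LinearIndependent (ZMod p) fun i => (b i : Fin n → ZMod p) :=
      b.linearIndependent.map' C.subtype (Submodule.ker_subtype C)
    exact h1.comp (Fin.castLE hr) (Fin.castLE_injective hr)
  refine ⟨Submodule.span (ZMod p) (Set.range v), ?_, ?_⟩
  · rw [Submodule.span_le]
    rintro _ ⟨i, rfl⟩
    exact (b (Fin.castLE hr i)).2
  · rw [finrank_span_eq_card hli, Fintype.card_fin]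

lemma cast_ceilDiv (a b : ℕ) (hb : 0 < b) : ⌈(a : ℚ) / (b : ℚ)⌉ = ((a ⌈/⌉ b : ℕ) : ℤ) := by
  have hbq : (0:ℚ) < b := by exact_mod_cast hb
  refine eq_of_forall_ge_iff fun m => ?_
  rw [Int.ceil_le, div_le_iff₀ hbq]
  rcases le_or_gt 0 m with hm | hm
  · lift m to ℕ using hm
    rw [show ((m : ℤ) : ℚ) = ((m : ℕ) : ℚ) by norm_cast]
    rw [show ((m : ℚ) * b) = ((m * b : ℕ) : ℚ) by push_cast; ring, Nat.cast_le, Nat.cast_le,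
      ceilDiv_le_iff_le_mul hb, mul_comm]
  · constructor
    · intro h
      exfalso
      have h1 : ((m : ℚ)) * b < 0 :=
        mul_neg_of_neg_of_pos (by exact_mod_cast hm) hbq
      have h2 : (0:ℚ) ≤ a := Nat.cast_nonneg a
      linarith
    · intro h
      exfalso
      have : (0:ℤ) ≤ ((a ⌈/⌉ b : ℕ) : ℤ) := Int.natCast_nonneg _
      omega

end Aux

/-- Griesmer-like bound: for an `[n,k]` linear code `C` over `F_p`
and `1 ≤ r ≤ k`, we have `d_r(C) ≥ ∑_{i=0}^{r-1} ⌈d_1(C) / p^i⌉`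
(the ceiling `⌈a/b⌉` of naturals is written `⌈(a : ℚ)/b⌉` here). -/
theorem griesmer_like_bound (p n k : ℕ) (hp : p.Prime) (hodd : Odd p)
    (C : Submodule (ZMod p) (Fin n → ZMod p))
    (hk : Module.finrank (ZMod p) C = k)
    (r : ℕ) (hr1 : 1 ≤ r) (hr2 : r ≤ k) :
    (ghw p C r : ℚ) ≥ ∑ i ∈ Finset.range r, ⌈(ghw p C 1 : ℚ) / p ^ i⌉ := by
  haveI : Fact p.Prime := ⟨hp⟩
  obtain ⟨U₀, hU₀C, hU₀r⟩ := exists_subcode C r (by rw [hk]; exact hr2)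
  have hne : {w : ℕ | ∃ U : Submodule (ZMod p) (Fin n → ZMod p), U ≤ C ∧
      Module.finrank (ZMod p) U = r ∧
      (Finset.univ.filter fun i : Fin n => ∃ x ∈ U, x i ≠ 0).card = w}.Nonempty := by
    refine ⟨(Finset.univ.filter fun i : Fin n => ∃ x ∈ U₀, x i ≠ 0).card, ?_⟩
    exact ⟨U₀, hU₀C, hU₀r, rfl⟩
  have hbridge : ∀ (P : Fin n → Prop) (i1 i2 : DecidablePred P),
      (@Finset.filter _ P i1 Finset.univ).card = (@Finset.filter _ P i2 Finset.univ).card := by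
    intro P i1 i2
    rw [(Finset.filter_congr_decidable Finset.univ P i1).trans
      (Finset.filter_congr_decidable Finset.univ P i2).symm]
  have hgeq : sInf {w : ℕ | ∃ U : Submodule (ZMod p) (Fin n → ZMod p), U ≤ C ∧
      Module.finrank (ZMod p) U = r ∧
      (Finset.univ.filter fun i : Fin n => ∃ x ∈ U, x i ≠ 0).card = w} = ghw p C r := by
    rw [ghw]
    congr 1
    ext w
    simp only [Set.mem_setOf_eq]
    constructor
    · rintro ⟨V, a, b, rfl⟩
      exact ⟨V, a, b, hbridge _ _ _⟩
    · rintro ⟨V, a, b, rfl⟩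
      exact ⟨V, a, b, hbridge _ _ _⟩
  have hmem := Nat.sInf_mem hne
  obtain ⟨U, hUC, hUr, hUcard⟩ := hmem
  set d := ghw p C 1 with hd
  have hdle : ∀ x ∈ U, x ≠ 0 → d ≤ (wtF x).card := by
    intro x hxU hxne
    refine Nat.sInf_le ⟨Submodule.span (ZMod p) {x}, ?_, finrank_span_singleton hxne, ?_⟩
    · rw [Submodule.span_le, Set.singleton_subset_iff]
      exact hUC hxU
    · congr 1
      ext i
      simp only [Finset.mem_filter, Finset.mem_univ, true_and, mem_wtF]
      constructor
      · rintro ⟨y, hy, hyi⟩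
        obtain ⟨c, rfl⟩ := Submodule.mem_span_singleton.1 hy
        intro h0
        exact hyi (by simp [h0])
      · exact fun h => ⟨x, Submodule.subset_span rfl, h⟩
  have hcore := griesmer_core r U d hUr hdle
  have hcard : (supF U).card = ghw p C r := by
    rw [← hgeq, ← hUcard]
    unfold supF
    exact hbridge _ _ _
  have hfin : ∑ i ∈ Finset.range r, ⌈(d : ℚ) / (p : ℚ) ^ i⌉ ≤ ((ghw p C r : ℤ)) := by
    calc ∑ i ∈ Finset.range r, ⌈(d : ℚ) / (p : ℚ) ^ i⌉
        = ∑ i ∈ Finset.range r, ((d ⌈/⌉ p ^ i : ℕ) : ℤ) := by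
          refine Finset.sum_congr rfl fun i _ => ?_
          rw [show ((p : ℚ) ^ i) = ((p ^ i : ℕ) : ℚ) by push_cast; ring]
          exact cast_ceilDiv d (p ^ i) (pow_pos hp.pos i)
      _ = ((∑ i ∈ Finset.range r, d ⌈/⌉ p ^ i : ℕ) : ℤ) := by push_cast; ring
      _ ≤ ((ghw p C r : ℤ)) := by
          rw [← hcard]
          exact_mod_cast hcore
  rw [ge_iff_le]
  exact_mod_cast hfin
end

section
/- Let p be an odd prime, q = p^m, D ⊆ F_q a set of size n, and suppose the code C_D has dimension m over F_p. Then for every 1 ≤ r ≤ m, d_r(C_D) = n − max{ |D ∩ H| : H is an F_p-subspace of F_q of dimension m − r }. -/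
open scoped Classical

/-- The linear code `C_D = {(Tr_{q/p}(a d))_{d ∈ D} : a ∈ F_q}` over `F_p`
with defining set `D ⊆ F_q`, with coordinates indexed by the elements of `D`. -/
noncomputable def codeD (p : ℕ) (F : Type*) [Field F] [Fintype F] [Algebra (ZMod p) F]
    (D : Finset F) : Submodule (ZMod p) (D → ZMod p) :=
  LinearMap.range (LinearMap.pi fun x : D =>
    (Algebra.trace (ZMod p) F).comp (LinearMap.mulRight (ZMod p) (x : F)))

open Module Finset

/-! Via the encoding map `a ↦ (Tr(a x))_{x ∈ D}`, injective because `dim C_D = m`, the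
`r`-dimensional subcodes of `C_D` are the images of the `r`-dimensional subspaces `W ≤ F`, and the
support of the image of `W` is `D ∖ W^⊥` for the nondegenerate trace form. Since `W ↦ W^⊥` is a
bijection from `r`-dimensional onto `(m - r)`-dimensional subspaces, minimizing the support is
maximizing `|D ∩ H|`. -/

theorem Nat.sInf_image_sub_eq_sub_sSup {S : Set ℕ} (hne : S.Nonempty) (hbdd : BddAbove S)
    (n : ℕ) :
    sInf ((n - ·) '' S) = n - sSup S :=
  le_antisymm (Nat.sInf_le ⟨_, Nat.sSup_mem hne hbdd, rfl⟩) <|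
    le_csInf (hne.image _) <| by
      rintro _ ⟨c, hc, rfl⟩
      exact Nat.sub_le_sub_left (le_csSup hbdd hc) n

theorem Submodule.exists_finrank_eq {K V : Type*} [DivisionRing K] [AddCommGroup V] [Module K V]
    {k : ℕ} (hk : k ≤ finrank K V) : ∃ H : Submodule K V, finrank K H = k := by
  obtain ⟨s, hs, hind⟩ := exists_finset_linearIndependent_of_le_finrank hk
  exact ⟨Submodule.span K s, by rw [finrank_span_finset_eq_card hind, hs]⟩

theorem Finset.card_filter_univ_coe {α : Type*} (s : Finset α) (P : α → Prop) :
    #{x : s | P x} = #{x ∈ s | P x} := by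
  rw [← card_map (Function.Embedding.subtype _)]
  congr 1
  ext x
  simp [and_comm]

theorem LinearMap.injective_of_finrank_range_eq {K V W : Type*} [DivisionRing K]
    [AddCommGroup V] [Module K V] [AddCommGroup W] [Module K W] [FiniteDimensional K V]
    {f : V →ₗ[K] W} (h : finrank K (LinearMap.range f) = finrank K V) :
    Function.Injective f := by
  have := f.finrank_range_add_finrank_ker
  exact LinearMap.ker_eq_bot.mp (Submodule.finrank_eq_zero.mp (by omega))

theorem ghw_range_of_injective {p : ℕ} {V ι : Type*} [AddCommGroup V] [Module (ZMod p) V]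
    [Fintype ι] {φ : V →ₗ[ZMod p] ι → ZMod p} (hφ : Function.Injective φ) (r : ℕ) :
    ghw p (LinearMap.range φ) r = sInf {w : ℕ | ∃ W : Submodule (ZMod p) V,
      finrank (ZMod p) W = r ∧ #{i | ∃ x ∈ W.map φ, x i ≠ 0} = w} := by
  have hrank (W : Submodule (ZMod p) V) : finrank (ZMod p) (W.map φ) = finrank (ZMod p) W :=
    (Submodule.equivMapOfInjective φ hφ W).finrank_eq.symm
  unfold ghw
  congr 1
  ext w
  constructor
  · rintro ⟨U, hU, rfl, rfl⟩
    have hmap : (U.comap φ).map φ = U := Submodule.map_comap_eq_of_le hU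
    exact ⟨U.comap φ, by rw [← hrank, hmap], by rw [hmap]⟩
  · rintro ⟨W, rfl, rfl⟩
    exact ⟨W.map φ, LinearMap.map_le_range, hrank W, rfl⟩

namespace LinearMap.BilinForm

variable {K V : Type*} [CommSemiring K] [AddCommMonoid V] [Module K V]
  (B : LinearMap.BilinForm K V)

def pairingOn (D : Finset V) : V →ₗ[K] D → K :=
  LinearMap.pi fun x : D => B.flip x

@[simp]
theorem pairingOn_apply (D : Finset V) (a : V) (x : D) : B.pairingOn D a x = B a x := rfl

theorem exists_map_pairingOn_ne_zero_iff {D : Finset V} (W : Submodule K V) (x : D) :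
    (∃ y ∈ W.map (B.pairingOn D), y x ≠ 0) ↔ (x : V) ∉ B.orthogonal W := by
  simp [mem_orthogonal_iff]

theorem card_support_map_pairingOn (D : Finset V) (W : Submodule K V) :
    #{x | ∃ y ∈ W.map (B.pairingOn D), y x ≠ 0} = #D - #{x ∈ D | x ∈ B.orthogonal W} := by
  have h := card_filter_add_card_filter_not (s := (univ : Finset D))
    fun x : D => (x : V) ∈ B.orthogonal W
  rw [card_filter_univ_coe, card_univ, Fintype.card_coe] at h
  simp only [exists_map_pairingOn_ne_zero_iff]
  omega

theorem exists_finrank_orthogonal_iff {K V : Type*} [Field K] [AddCommGroup V] [Module K V]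
    [FiniteDimensional K V] {B : LinearMap.BilinForm K V}
    (hB : B.Nondegenerate) (hrefl : B.IsRefl) {r : ℕ} (hr : r ≤ finrank K V)
    (P : Submodule K V → Prop) :
    (∃ W : Submodule K V, finrank K W = r ∧ P (B.orthogonal W)) ↔
      ∃ H : Submodule K V, finrank K H = finrank K V - r ∧ P H := by
  constructor
  · rintro ⟨W, rfl, hW⟩
    exact ⟨_, finrank_orthogonal hB W, hW⟩
  · rintro ⟨H, hH, hPH⟩
    refine ⟨B.orthogonal H, by rw [finrank_orthogonal hB, hH]; omega, ?_⟩
    rwa [orthogonal_orthogonal hB hrefl]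

end LinearMap.BilinForm

theorem ghw_range_pairingOn {p : ℕ} [Fact p.Prime] {V : Type*} [AddCommGroup V]
    [Module (ZMod p) V] [FiniteDimensional (ZMod p) V] {B : LinearMap.BilinForm (ZMod p) V}
    (hB : B.Nondegenerate) (hrefl : B.IsRefl) {D : Finset V}
    (hinj : Function.Injective (B.pairingOn D)) {r : ℕ} (hr : r ≤ finrank (ZMod p) V) :
    ghw p (LinearMap.range (B.pairingOn D)) r =
      #D - sSup {c : ℕ | ∃ H : Submodule (ZMod p) V,
        finrank (ZMod p) H = finrank (ZMod p) V - r ∧ #{x ∈ D | x ∈ H} = c} := by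
  set S := {c : ℕ | ∃ H : Submodule (ZMod p) V,
    finrank (ZMod p) H = finrank (ZMod p) V - r ∧ #{x ∈ D | x ∈ H} = c}
  have hne : S.Nonempty := by
    obtain ⟨H, hH⟩ := Submodule.exists_finrank_eq (K := ZMod p) (V := V) (Nat.sub_le _ r)
    exact ⟨_, H, hH, rfl⟩
  have hbdd : BddAbove S := ⟨#D, by rintro _ ⟨H, -, rfl⟩; exact card_filter_le _ _⟩
  rw [ghw_range_of_injective hinj, ← Nat.sInf_image_sub_eq_sub_sSup hne hbdd]
  congr 1
  ext w
  simp only [B.card_support_map_pairingOn, Set.mem_image, Set.mem_ofPred_eq]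
  rw [B.exists_finrank_orthogonal_iff hB hrefl hr (fun H => #D - #{x ∈ D | x ∈ H} = w)]
  aesop

theorem codeD_eq_range_pairingOn (p : ℕ) (F : Type*) [Field F] [Fintype F]
    [Algebra (ZMod p) F] (D : Finset F) :
    codeD p F D = LinearMap.range ((Algebra.traceForm (ZMod p) F).pairingOn D) :=
  rfl

theorem ghw_codeD_eq_sub_max_inter_general
    (p m n : ℕ) (hp : p.Prime)
    (F : Type*) [Field F] [Fintype F] [Algebra (ZMod p) F]
    (hF : Fintype.card F = p ^ m)
    (D : Finset F) (hn : D.card = n)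
    (hdim : Module.finrank (ZMod p) (codeD p F D) = m)
    (r : ℕ) (hr2 : r ≤ m) :
    ghw p (codeD p F D) r =
      n - sSup {c : ℕ | ∃ H : Submodule (ZMod p) F,
        Module.finrank (ZMod p) H = m - r ∧ (D.filter fun x => x ∈ H).card = c} := by
  have : Fact p.Prime := ⟨hp⟩
  have hFm : finrank (ZMod p) F = m := by
    rw [card_eq_pow_finrank (K := ZMod p), ZMod.card] at hF
    exact Nat.pow_right_injective hp.two_le hF
  rw [codeD_eq_range_pairingOn] at hdim ⊢
  rw [ghw_range_pairingOn (traceForm_nondegenerate _ _)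
    (Algebra.traceForm_isSymm (ZMod p) (S := F)).isRefl
    (LinearMap.injective_of_finrank_range_eq (hdim.trans hFm.symm)) (hFm ▸ hr2), hFm, hn]

/-- if `q = p^m`, `|D| = n` and `dim C_D = m`, then for `1 ≤ r ≤ m`,
`d_r(C_D) = n - max{|D ∩ H| : H ≤ F_q an F_p-subspace of dimension m - r}`. -/
theorem ghw_codeD_eq_sub_max_inter
    (p m n : ℕ) (hp : p.Prime) (hodd : Odd p)
    (F : Type*) [Field F] [Fintype F] [Algebra (ZMod p) F]
    (hF : Fintype.card F = p ^ m)
    (D : Finset F) (hn : D.card = n)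
    (hdim : Module.finrank (ZMod p) (codeD p F D) = m)
    (r : ℕ) (hr1 : 1 ≤ r) (hr2 : r ≤ m) :
    ghw p (codeD p F D) r =
      n - sSup {c : ℕ | ∃ H : Submodule (ZMod p) F,
        Module.finrank (ZMod p) H = m - r ∧ (D.filter fun x => x ∈ H).card = c} :=
  ghw_codeD_eq_sub_max_inter_general p m n hp F hF D hn hdim r hr2
end

section
/- Let p be an odd prime, q = p^m, D ⊆ F_q a set of size n, and suppose the code C_D has dimension m over F_p. Then for every 1 ≤ r ≤ m, d_r(C_D) = n − max{ N(H_r) : H_r is an F_p-subspace of F_q of dimension r }, where N(H_r) = n/p^r + (1/p^r)·Σ_{a ∈ H_r, a ≠ 0} Σ_{x ∈ D} χ(a x) and χ is the canonical additive character of F_q. -/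
open scoped Classical

/-- The canonical additive character of a finite field `F` of characteristic `p`:
`χ(x) = ζ_p ^ Tr_{F/F_p}(x)` where `ζ_p = e^{2π√-1/p}`. -/
noncomputable def canonChar (p : ℕ) (F : Type*) [Field F] [Fintype F] [Algebra (ZMod p) F]
    (x : F) : ℂ :=
  Complex.exp (2 * Real.pi * Complex.I / p) ^ ((Algebra.trace (ZMod p) F) x).val

section Aux0

variable (p : ℕ) (F : Type*) [Field F] [Fintype F] [Algebra (ZMod p) F]

/-- The number of points of `D` annihilated by `H` under the trace pairing. -/
noncomputable def NH (D : Finset F) (H : Submodule (ZMod p) F) : ℕ :=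
  (D.filter fun x => ∀ a ∈ H, Algebra.trace (ZMod p) F (a * x) = 0).card

lemma support_card (D : Finset F) (H : Submodule (ZMod p) F) :
    (Finset.univ.filter fun i : D =>
        ∃ a ∈ H, Algebra.trace (ZMod p) F (a * (i : F)) ≠ 0).card
      = D.card - NH p F D H := by
  set Q : F → Prop := fun x => ∀ a ∈ H, Algebra.trace (ZMod p) F (a * x) = 0 with hQ
  have h1 : (Finset.univ.filter fun i : D => Q (i : F)).card = NH p F D H := by
    apply Finset.card_bij (fun (i : D) _ => (i : F))
    · intro a ha
      rw [Finset.mem_filter] at ha ⊢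
      exact ⟨a.2, ha.2⟩
    · intro a _ b _ hab
      exact Subtype.ext hab
    · intro b hb
      rw [Finset.mem_filter] at hb
      exact ⟨⟨b, hb.1⟩, Finset.mem_filter.mpr ⟨Finset.mem_univ _, hb.2⟩, rfl⟩
  have h2 : (Finset.univ.filter fun i : D =>
      ∃ a ∈ H, Algebra.trace (ZMod p) F (a * (i : F)) ≠ 0)
      = Finset.univ.filter fun i : D => ¬ Q (i : F) := by
    apply Finset.filter_congr
    intro i _
    simp [hQ]
  have h3 := Finset.card_filter_add_card_filter_not
    (s := (Finset.univ : Finset D)) (fun i : D => Q (i : F))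
  rw [h2]
  have hcard : (Finset.univ : Finset D).card = D.card := by
    rw [Finset.card_univ]; exact Fintype.card_coe D
  omega

lemma NH_le (D : Finset F) (H : Submodule (ZMod p) F) : NH p F D H ≤ D.card :=
  Finset.card_filter_le _ _

end Aux0

section Aux

variable (p : ℕ) [Fact p.Prime] (F : Type*) [Field F] [Fintype F] [Algebra (ZMod p) F]

/-- Character sum over a subspace. -/
lemma sum_canonChar_subspace (H : Submodule (ZMod p) F) (x : F) :
    ∑ a ∈ Finset.univ.filter (· ∈ H), canonChar p F (a * x)
      = if ∀ a ∈ H, Algebra.trace (ZMod p) F (a * x) = 0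
        then (Fintype.card H : ℂ) else 0 := by
  have hp : p.Prime := Fact.out
  haveI : NeZero p := ⟨hp.ne_zero⟩
  set ζ : ℂ := Complex.exp (2 * Real.pi * Complex.I / p) with hζdef
  have hprim : IsPrimitiveRoot ζ p := Complex.isPrimitiveRoot_exp p hp.ne_zero
  have hζ : ζ ^ p = 1 := hprim.pow_eq_one
  set ψ0 : AddChar (ZMod p) ℂ := AddChar.zmodChar p hζ with hψ0def
  have hval : ∀ v : ZMod p, ψ0 v = 1 ↔ v = 0 := by
    intro v
    rw [hψ0def, AddChar.zmodChar_apply, hprim.pow_eq_one_iff_dvd, ← ZMod.val_eq_zero]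
    exact ⟨fun h => Nat.eq_zero_of_dvd_of_lt h (ZMod.val_lt v), fun h => h ▸ dvd_zero p⟩
  set φ : H →+ ZMod p :=
    (((Algebra.trace (ZMod p) F).comp (LinearMap.mulRight (ZMod p) x)).comp
      H.subtype).toAddMonoidHom with hφdef
  set ψ : AddChar H ℂ := ψ0.compAddMonoidHom φ with hψdef
  have hψa : ∀ a : H, ψ a = canonChar p F ((a : F) * x) := fun a => rfl
  have hφa : ∀ a : H, φ a = Algebra.trace (ZMod p) F ((a : F) * x) := fun a => rfl
  have hsum : ∑ a ∈ Finset.univ.filter (· ∈ H), canonChar p F (a * x) = ∑ a : H, ψ a := by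
    rw [Finset.sum_subtype (p := fun a : F => a ∈ H) _ (by simp)]
    exact Finset.sum_congr rfl fun a _ => (hψa a).symm
  rw [hsum]
  by_cases h : ∀ a ∈ H, Algebra.trace (ZMod p) F (a * x) = 0
  · rw [if_pos h]
    have hψ1 : ψ = 1 := by
      ext a
      rw [hψdef, AddChar.compAddMonoidHom_apply]
      have : φ a = 0 := by rw [hφa]; exact h a a.2
      rw [this, AddChar.map_zero_eq_one, AddChar.one_apply]
    exact AddChar.sum_eq_card_of_eq_one hψ1
  · rw [if_neg h]
    push_neg at h
    obtain ⟨a, haH, ha⟩ := h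
    have hψne : ψ ≠ 1 := by
      rw [AddChar.ne_one_iff]
      refine ⟨⟨a, haH⟩, ?_⟩
      rw [hψdef, AddChar.compAddMonoidHom_apply]
      intro hcon
      exact ha ((hval _).mp hcon)
    exact AddChar.sum_eq_zero_of_ne_one hψne

lemma key_count (D : Finset F) (H : Submodule (ZMod p) F) (r : ℕ)
    (hH : Module.finrank (ZMod p) H = r) :
    (D.card : ℂ) / p ^ r + (1 / p ^ r) *
        ∑ a ∈ Finset.univ.filter (fun a : F => a ∈ H ∧ a ≠ 0),
          ∑ x ∈ D, canonChar p F (a * x)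
      = (NH p F D H : ℂ) := by
  have hp : p.Prime := Fact.out
  haveI : NeZero p := ⟨hp.ne_zero⟩
  have hcardH : (Fintype.card H : ℂ) = (p : ℂ) ^ r := by
    have : Fintype.card H = Fintype.card (ZMod p) ^ Module.finrank (ZMod p) H :=
      Module.card_eq_pow_finrank
    rw [this, ZMod.card, hH]
    push_cast
    ring
  have hpr : ((p : ℂ)) ^ r ≠ 0 := pow_ne_zero r (by exact_mod_cast hp.ne_zero)
  set S := Finset.univ.filter (· ∈ H) with hSdef
  have h0S : (0 : F) ∈ S := by simp [hSdef, H.zero_mem]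
  have hErase : S.erase 0 = Finset.univ.filter (fun a : F => a ∈ H ∧ a ≠ 0) := by
    ext a
    simp [hSdef, Finset.mem_erase, and_comm]
  have hzero : ∑ x ∈ D, canonChar p F ((0 : F) * x) = (D.card : ℂ) := by
    rw [Finset.sum_congr rfl fun x _ => ?_, Finset.sum_const, nsmul_eq_mul, mul_one]
    rw [zero_mul]
    simp [canonChar]
  have hA : ∑ a ∈ S, ∑ x ∈ D, canonChar p F (a * x)
      = (D.card : ℂ) + ∑ a ∈ Finset.univ.filter (fun a : F => a ∈ H ∧ a ≠ 0),
          ∑ x ∈ D, canonChar p F (a * x) := by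
    rw [← Finset.add_sum_erase S _ h0S, hErase, hzero]
  have hB : ∑ a ∈ S, ∑ x ∈ D, canonChar p F (a * x) = (NH p F D H : ℂ) * (p : ℂ) ^ r := by
    rw [Finset.sum_comm]
    have : ∀ x ∈ D, ∑ a ∈ S, canonChar p F (a * x)
        = if ∀ a ∈ H, Algebra.trace (ZMod p) F (a * x) = 0 then ((p : ℂ) ^ r) else 0 := by
      intro x _
      rw [hSdef, sum_canonChar_subspace, hcardH]
    rw [Finset.sum_congr rfl this, ← Finset.sum_filter, Finset.sum_const, nsmul_eq_mul]
    rfl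
  have key : (D.card : ℂ) + ∑ a ∈ Finset.univ.filter (fun a : F => a ∈ H ∧ a ≠ 0),
      ∑ x ∈ D, canonChar p F (a * x) = (NH p F D H : ℂ) * (p : ℂ) ^ r := hA.symm.trans hB
  field_simp
  linear_combination key

end Aux

/-- if `q = p^m`, `|D| = n` and `dim C_D = m`, then for `1 ≤ r ≤ m`,
`d_r(C_D) = n - max{N(H_r) : H_r ≤ F_q an F_p-subspace of dimension r}`, where
`N(H_r) = n/p^r + (1/p^r) ∑_{a ∈ H_r, a ≠ 0} ∑_{x ∈ D} χ(a x)`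
(a nonnegative integer). -/
theorem ghw_codeD_eq_sub_max_charSum
    (p m n : ℕ) (hp : p.Prime) (hodd : Odd p)
    (F : Type*) [Field F] [Fintype F] [Algebra (ZMod p) F]
    (hF : Fintype.card F = p ^ m)
    (D : Finset F) (hn : D.card = n)
    (hdim : Module.finrank (ZMod p) (codeD p F D) = m)
    (r : ℕ) (hr1 : 1 ≤ r) (hr2 : r ≤ m) :
    ghw p (codeD p F D) r =
      n - sSup {c : ℕ | ∃ H : Submodule (ZMod p) F,
        Module.finrank (ZMod p) H = r ∧
        (n : ℂ) / p ^ r + (1 / p ^ r) *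
            ∑ a ∈ Finset.univ.filter (fun a : F => a ∈ H ∧ a ≠ 0),
              ∑ x ∈ D, canonChar p F (a * x) = (c : ℂ)} := by
  haveI : Module.Finite (ZMod p) F := Module.Finite.of_finite
  subst hn
  set L : F →ₗ[ZMod p] (D → ZMod p) :=
    LinearMap.pi (fun x : D =>
      (Algebra.trace (ZMod p) F).comp (LinearMap.mulRight (ZMod p) (x : F))) with hLdef
  have hcode : codeD p F D = LinearMap.range L := rfl
  have hrankF : Module.finrank (ZMod p) F = m := by
    haveI := Fact.mk hp
    have h := Module.card_eq_pow_finrank (K := ZMod p) (V := F)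
    rw [ZMod.card, hF] at h
    exact (Nat.pow_right_injective hp.two_le h.symm)
  have hLinj : Function.Injective L := by
    haveI := Fact.mk hp
    rw [← LinearMap.ker_eq_bot]
    have h := LinearMap.finrank_range_add_finrank_ker L
    rw [hrankF] at h
    rw [hcode] at hdim
    rw [hdim] at h
    have h0 : Module.finrank (ZMod p) (LinearMap.ker L) = 0 := by omega
    exact Submodule.finrank_eq_zero.mp h0
  have hLapp : ∀ (a : F) (i : D), L a i = Algebra.trace (ZMod p) F (a * (i : F)) :=
    fun a i => rfl
  -- the RHS set is the set of values `NH p F D H`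
  have hSet : {c : ℕ | ∃ H : Submodule (ZMod p) F,
      Module.finrank (ZMod p) H = r ∧
      (↑D.card : ℂ) / p ^ r + (1 / p ^ r) *
          ∑ a ∈ Finset.univ.filter (fun a : F => a ∈ H ∧ a ≠ 0),
            ∑ x ∈ D, canonChar p F (a * x) = (c : ℂ)}
      = {c : ℕ | ∃ H : Submodule (ZMod p) F,
          Module.finrank (ZMod p) H = r ∧ NH p F D H = c} := by
    haveI := Fact.mk hp
    ext c
    constructor
    · rintro ⟨H, hH, heq⟩
      refine ⟨H, hH, ?_⟩
      have := (key_count p F D H r hH).symm.trans heq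
      exact_mod_cast this
    · rintro ⟨H, hH, hc⟩
      exact ⟨H, hH, by rw [key_count p F D H r hH, hc]⟩
  rw [hSet]
  -- the ghw set is the set of values `D.card - NH p F D H`
  have hW : {w : ℕ | ∃ U : Submodule (ZMod p) (D → ZMod p), U ≤ codeD p F D ∧
      Module.finrank (ZMod p) U = r ∧
      (Finset.univ.filter fun i : D => ∃ x ∈ U, x i ≠ 0).card = w}
      = {w : ℕ | ∃ H : Submodule (ZMod p) F,
          Module.finrank (ZMod p) H = r ∧ D.card - NH p F D H = w} := by
    ext w
    constructor
    · rintro ⟨U, hUle, hUr, hWcard⟩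
      rw [hcode] at hUle
      have hmap : (U.comap L).map L = U := Submodule.map_comap_eq_self hUle
      refine ⟨U.comap L, ?_, ?_⟩
      · have h := LinearEquiv.finrank_eq
          (Submodule.equivMapOfInjective L hLinj (U.comap L))
        rw [hmap] at h
        exact h.trans hUr
      · rw [← hWcard, ← support_card p F D (U.comap L)]
        congr 1
        apply Finset.filter_congr
        intro i _
        constructor
        · rintro ⟨a, haH, ha⟩
          refine ⟨L a, Submodule.mem_comap.mp haH, ?_⟩
          rw [hLapp]; exact ha
        · rintro ⟨x, hxU, hxi⟩
          obtain ⟨a, rfl⟩ := hUle hxU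
          exact ⟨a, Submodule.mem_comap.mpr hxU, by rw [← hLapp a i]; exact hxi⟩
    · rintro ⟨H, hH, hw⟩
      refine ⟨H.map L, ?_, ?_, ?_⟩
      · rw [hcode]; exact LinearMap.map_le_range
      · have h := LinearEquiv.finrank_eq (Submodule.equivMapOfInjective L hLinj H)
        rw [← h, hH]
      · rw [← hw, ← support_card p F D H]
        congr 1
        apply Finset.filter_congr
        intro i _
        constructor
        · rintro ⟨x, hxU, hxi⟩
          obtain ⟨a, haH, rfl⟩ := Submodule.mem_map.mp hxU
          exact ⟨a, haH, by rw [← hLapp a i]; exact hxi⟩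
        · rintro ⟨a, haH, ha⟩
          exact ⟨L a, Submodule.mem_map.mpr ⟨a, haH, rfl⟩, by rw [hLapp]; exact ha⟩
  -- a subspace of dimension `r` exists
  have hexH : ∃ H : Submodule (ZMod p) F, Module.finrank (ZMod p) H = r := by
    haveI := Fact.mk hp
    have hrm : r ≤ Module.finrank (ZMod p) F := hrankF ▸ hr2
    set b := Module.finBasis (ZMod p) F with hb
    set f : Fin r → F := fun j => b (Fin.castLE hrm j) with hf
    have hli : LinearIndependent (ZMod p) f :=
      b.linearIndependent.comp _ (Fin.castLE_injective hrm)
    refine ⟨Submodule.span (ZMod p) (Set.range f), ?_⟩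
    rw [finrank_span_eq_card hli, Fintype.card_fin]
  set T : Set ℕ := {c : ℕ | ∃ H : Submodule (ZMod p) F,
      Module.finrank (ZMod p) H = r ∧ NH p F D H = c} with hT
  have hTne : T.Nonempty := by
    obtain ⟨H, hH⟩ := hexH
    exact ⟨NH p F D H, H, hH, rfl⟩
  have hTbdd : BddAbove T := by
    refine ⟨D.card, ?_⟩
    rintro c ⟨H, -, rfl⟩
    exact NH_le p F D H
  have hM : sSup T ∈ T := Nat.sSup_mem hTne hTbdd
  rw [ghw]
  rw [hW]
  apply le_antisymm
  · apply Nat.sInf_le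
    obtain ⟨H, hH, hNH⟩ := hM
    exact ⟨H, hH, by rw [hNH]⟩
  · apply le_csInf
    · obtain ⟨H, hH, hNH⟩ := hM
      exact ⟨D.card - sSup T, H, hH, by rw [hNH]⟩
    · rintro w ⟨H, hH, rfl⟩
      exact Nat.sub_le_sub_left (le_csSup hTbdd ⟨H, hH, rfl⟩) _
end

section
/- Let p be an odd prime with p ≡ 1 (mod 4), m = 2s with s an odd positive integer and gcd(m,p) = 1, q = p^m, and d = (q−1)/(p+1). Then the set D = {x ∈ F_q^* : Tr_{q/p}(x^d) = 0} is empty. -/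
/-!
For `y = x ^ d` we have `y ^ (p + 1) = x ^ (q - 1) = 1`, so the Frobenius sends `y` to `y⁻¹` and
the conjugates of `y` alternate between `y` and `y⁻¹`. Hence `Tr(y) = s (y + y⁻¹)`, and since
`p ∤ s` a zero trace forces `y ^ 2 = -1`. But `(p + 1) / 2` is odd when `p ≡ 1 (mod 4)`, so then
`1 = y ^ (p + 1) = (-1) ^ ((p + 1) / 2) = -1`, impossible in odd characteristic.
-/

open scoped Classical

open Finset

lemma Nat.add_one_dvd_pow_two_mul_sub_one (a s : ℕ) : a + 1 ∣ a ^ (2 * s) - 1 := by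
  have hsq : a + 1 ∣ a ^ 2 - 1 := Dvd.intro (a - 1) (by rw [← Nat.sq_sub_sq, one_pow])
  refine hsq.trans ?_
  simpa only [pow_mul, one_pow] using Nat.sub_dvd_pow_sub_pow (a ^ 2) 1 s

lemma Module.finrank_eq_of_card_eq_pow {K V : Type*} [Field K] [Fintype K] [AddCommGroup V]
    [Module K V] [Fintype V] {n : ℕ} (h : Fintype.card V = Fintype.card K ^ n) :
    Module.finrank K V = n :=
  Nat.pow_right_injective Fintype.one_lt_card ((Module.card_eq_pow_finrank (K := K)).symm.trans h)

section AlternatingConjugates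

variable {F : Type*} [DivisionRing F] {y : F} {Q : ℕ}

lemma pow_pow_two_mul_of_pow_eq_inv (hy : y ^ Q = y⁻¹) (j : ℕ) : y ^ Q ^ (2 * j) = y := by
  induction j with
  | zero => simp
  | succ j ih => rw [Nat.mul_succ, pow_add, pow_mul, ih, sq, pow_mul, hy, inv_pow, hy, inv_inv]

lemma sum_range_two_mul_pow_pow_of_pow_eq_inv (hy : y ^ Q = y⁻¹) (t : ℕ) :
    ∑ i ∈ range (2 * t), y ^ Q ^ i = t • (y + y⁻¹) := by
  induction t with
  | zero => simp
  | succ t ih =>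
    rw [Nat.mul_succ, sum_range_succ, sum_range_succ, ih, pow_succ Q (2 * t), pow_mul y _ Q,
      pow_pow_two_mul_of_pow_eq_inv hy, hy, succ_nsmul, add_assoc]

end AlternatingConjugates

lemma FiniteField.algebraMap_trace_eq_nsmul_add_inv {K L : Type*} [Field K] [Field L] [Finite L]
    [Algebra K L] {y : L} (hy : y ^ Nat.card K = y⁻¹) {t : ℕ} (ht : Module.finrank K L = 2 * t) :
    algebraMap K L (Algebra.trace K L y) = t • (y + y⁻¹) := by
  rw [algebraMap_trace_eq_sum_pow, ht, sum_range_two_mul_pow_pow_of_pow_eq_inv hy]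

lemma add_inv_ne_zero_of_pow_two_mul_eq_one {F : Type*} [Field F] (h2 : (2 : F) ≠ 0) {y : F}
    {k : ℕ} (hk : Odd k) (hy : y ^ (2 * k) = 1) : y + y⁻¹ ≠ 0 := by
  intro hsum
  have hy0 : y ≠ 0 := by
    rintro rfl
    simp [hk.pos.ne'] at hy
  have hsq : y ^ 2 = -1 := by
    field_simp at hsum
    linear_combination hsum
  rw [pow_mul, hsq, hk.neg_one_pow] at hy
  exact h2 (by linear_combination -hy)

theorem defining_set_empty_p_one_mod_four_general
    (p m s : ℕ) (hp : p.Prime) (h4 : p % 4 = 1)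
    (hm : m = 2 * s) (hmp : Nat.gcd m p = 1)
    (q d : ℕ) (hq : q = p ^ m) (hd : d = (q - 1) / (p + 1))
    (F : Type*) [Field F] [Fintype F] [Algebra (ZMod p) F]
    (hF : Fintype.card F = q) :
    (Finset.univ.filter fun x : F =>
      x ≠ 0 ∧ Algebra.trace (ZMod p) F (x ^ d) = 0) = ∅ := by
  have : Fact p.Prime := ⟨hp⟩
  have : CharP F p := charP_of_injective_algebraMap (algebraMap (ZMod p) F).injective p
  have hrank : Module.finrank (ZMod p) F = 2 * s :=
    Module.finrank_eq_of_card_eq_pow (by rw [hF, ZMod.card, hq, hm])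
  have hps : ¬ p ∣ s :=
    hp.coprime_iff_not_dvd.mp ((Nat.coprime_comm.mp hmp).coprime_dvd_right (hm ▸ dvd_mul_left s 2))
  have hs_ne : (s : F) ≠ 0 := (CharP.cast_eq_zero_iff F p s).not.mpr hps
  have h2 : (2 : F) ≠ 0 := Ring.two_ne_zero (by rw [ringChar.eq F p]; omega)
  have hdq : d * (p + 1) = q - 1 := by
    rw [hd, hq, hm]
    exact Nat.div_mul_cancel (Nat.add_one_dvd_pow_two_mul_sub_one p s)
  obtain ⟨k, hpk, hk⟩ : ∃ k, p + 1 = 2 * k ∧ Odd k :=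
    ⟨(p + 1) / 2, by omega, Nat.odd_iff.mpr (by omega)⟩
  ext x
  simp only [mem_filter, mem_univ, true_and, notMem_empty, iff_false, not_and]
  intro hx htr
  have hy : (x ^ d) ^ (p + 1) = 1 := by
    rw [← pow_mul, hdq, ← hF]
    exact FiniteField.pow_card_sub_one_eq_one x hx
  have hconj : (x ^ d) ^ Nat.card (ZMod p) = (x ^ d)⁻¹ :=
    eq_inv_of_mul_eq_one_left (by rwa [Nat.card_zmod, ← pow_succ])
  have htrace := FiniteField.algebraMap_trace_eq_nsmul_add_inv hconj hrank
  rw [htr, map_zero, nsmul_eq_mul] at htrace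
  exact add_inv_ne_zero_of_pow_two_mul_eq_one h2 hk (hpk ▸ hy)
    ((mul_eq_zero.mp htrace.symm).resolve_left hs_ne)

/-- for `p ≡ 1 (mod 4)`, `m = 2s` with `s` odd, `gcd(m,p) = 1`,
`q = p^m` and `d = (q-1)/(p+1)`, the set `D = {x ∈ F_q^* : Tr_{q/p}(x^d) = 0}`
is empty. -/
theorem defining_set_empty_p_one_mod_four
    (p m s : ℕ) (hp : p.Prime) (hodd : Odd p) (h4 : p % 4 = 1)
    (hm : m = 2 * s) (hs : Odd s) (hs0 : 0 < s) (hmp : Nat.gcd m p = 1)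
    (q d : ℕ) (hq : q = p ^ m) (hd : d = (q - 1) / (p + 1))
    (F : Type*) [Field F] [Fintype F] [Algebra (ZMod p) F]
    (hF : Fintype.card F = q) :
    (Finset.univ.filter fun x : F =>
      x ≠ 0 ∧ Algebra.trace (ZMod p) F (x ^ d) = 0) = ∅ :=
  defining_set_empty_p_one_mod_four_general p m s hp h4 hm hmp q d hq hd F hF
end

section
/- Let p be an odd prime with p ≡ 3 (mod 4), m = 2s with s an odd positive integer and gcd(m,p) = 1, q = p^m, d = (q−1)/(p+1), α a primitive element of F_q, and D = {x ∈ F_q^* : Tr_{q/p}(x^d) = 0}. For a ∈ F_q^*, write a ∈ C_δ^{(p+1,q)} with 0 ≤ δ ≤ p, and let c(a) = (Tr_{q/p}(a x))_{x ∈ D}. Then the Hamming weight of c(a) equals p^{s−1}(2p^s − p + 1)(p − 1)/(p+1) if Tr_{q/p}(α^{−dδ}) = 0, and equals 2p^{s−1}(p^s + 1)(p − 1)/(p+1) if Tr_{q/p}(α^{−dδ}) ≠ 0. In particular, C_D is a two-weight code. -/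
/-!
Write `n = p^s`, so `q = n²`, and `t = (n + 1)/(p + 1)`, so `d = (n - 1) t`. An element `u` with
`u^(p+1) = 1` has `u^p = u⁻¹`, hence `Tr(u) = s (u + u⁻¹)`, which vanishes iff `u² = -1` since
`p ∤ s`. Applied to `u = x^d` this gives `D = {x : x^(2d) = -1}`, so the weight of `c(a)` is the
number of `y` with `y^(2d) = b := -a^(2d)` and `Tr(y) ≠ 0`. As `4 ∣ p + 1`, `b` is the `2d`-th
power of `α^((p+1)/4) a`, so there are `2d` such `y`.

This set is stable under multiplication by `𝔽_n^*`, and for `z ∈ 𝔽_n` we have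
`Tr(yz) = Tr_{𝔽_n/𝔽_p}((y + y^n) z)`. When `y + y^n ≠ 0` this is a nonzero `𝔽_p`-linear form
in `z` (a polynomial of degree `n/p` cannot vanish on all of `𝔽_n`), so it vanishes on exactly
`n/p` elements. Double counting the pairs `(z, y)` with `Tr(zy) ≠ 0` gives
`(n - 1)·wt(c(a)) = #{y : y^(2d) = b, y + y^n ≠ 0}·(n - n/p)`. Finally `y + y^n = 0` means
`y^(n-1) = -1`, which forces `y^(2d) = 1`; so the `n - 1` such `y` are excluded exactly when
`b = 1`, i.e. when `Tr(α^(-dδ)) = 0`.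
-/

open scoped Classical

open Finset Polynomial Module

theorem pow_two_mul_sub_one_eq_mul {p s t : ℕ} (ht : (p + 1) * t = p ^ s + 1) :
    p ^ (2 * s) - 1 = (p + 1) * ((p ^ s - 1) * t) := by
  rw [mul_comm 2 s, pow_mul, sq, mul_self_tsub_one, ← ht]
  ring

theorem two_mul_sub_one_mul_sub_pow {p s t : ℕ} (hp : 0 < p) (hs : 0 < s)
    (ht : (p + 1) * t = p ^ s + 1) :
    (2 * t - 1) * (p ^ s - p ^ (s - 1)) =
      p ^ (s - 1) * (2 * p ^ s - p + 1) * (p - 1) / (p + 1) := by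
  have hps : p ^ s = p ^ (s - 1) * p := by rw [← pow_succ, Nat.sub_add_cancel hs]
  have h1 : 1 ≤ p ^ (s - 1) := Nat.one_le_pow _ _ hp
  rw [hps] at ht ⊢
  refine (Nat.div_eq_of_eq_mul_left (by omega) ?_).symm
  have ht1 : 1 ≤ t := Nat.pos_of_ne_zero (by rintro rfl; omega)
  zify [show 1 ≤ 2 * t by omega, Nat.le_mul_of_pos_right (p ^ (s - 1)) hp, hp,
    show p ≤ 2 * (p ^ (s - 1) * p) by nlinarith]
  have htZ : ((p : ℤ) + 1) * t = p ^ (s - 1) * p + 1 := by exact_mod_cast ht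
  linear_combination (-2 * (p : ℤ) ^ (s - 1) * ((p : ℤ) - 1)) * htZ

theorem two_mul_mul_sub_pow {p s t : ℕ} (hp : 0 < p) (hs : 0 < s)
    (ht : (p + 1) * t = p ^ s + 1) :
    2 * t * (p ^ s - p ^ (s - 1)) = 2 * p ^ (s - 1) * (p ^ s + 1) * (p - 1) / (p + 1) := by
  have hps : p ^ s = p ^ (s - 1) * p := by rw [← pow_succ, Nat.sub_add_cancel hs]
  rw [hps] at ht ⊢
  refine (Nat.div_eq_of_eq_mul_left (by omega) ?_).symm
  zify [Nat.le_mul_of_pos_right (p ^ (s - 1)) hp, hp]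
  have htZ : ((p : ℤ) + 1) * t = p ^ (s - 1) * p + 1 := by exact_mod_cast ht
  linear_combination (-2 * (p : ℤ) ^ (s - 1) * ((p : ℤ) - 1)) * htZ

theorem IsPrimitiveRoot.card_nthRootsFinset_of_pow_eq {R : Type*} [CommRing R] [IsDomain R]
    {ζ : R} {n : ℕ} (hζ : IsPrimitiveRoot ζ n) {x a : R} (hx : x ^ n = a) (ha : a ≠ 0) :
    #(nthRootsFinset n a) = n := by
  classical
  rw [nthRootsFinset_def, Multiset.toFinset_card_of_nodup (hζ.nthRoots_nodup ha),
    hζ.card_nthRoots, if_pos ⟨x, hx⟩]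

theorem image_mul_nthRootsFinset {K : Type*} [Field K] [DecidableEq K] {n : ℕ} (hn : 0 < n)
    {a : K} (ha : a ≠ 0) (c : K) :
    (nthRootsFinset n c).image (a * ·) = nthRootsFinset n (a ^ n * c) := by
  ext y
  simp only [mem_image, mem_nthRootsFinset hn]
  constructor
  · rintro ⟨x, rfl, rfl⟩
    exact mul_pow a x n
  · intro hy
    refine ⟨a⁻¹ * y, ?_, mul_inv_cancel_left₀ ha y⟩
    rw [mul_pow, hy, inv_pow, inv_mul_cancel_left₀ (pow_ne_zero n ha)]

theorem exists_sum_pow_mul_ne_zero {K : Type*} [Field K] {p s : ℕ} (hp : 1 < p) (hs : 0 < s)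
    {c : K} (hc : c ≠ 0) {S : Finset K} (hS : p ^ (s - 1) < #S) :
    ∃ z ∈ S, ∑ i ∈ range s, (c * z) ^ p ^ i ≠ 0 := by
  by_contra! h
  set P : K[X] := ∑ i ∈ range s, (C c * X) ^ p ^ i
  have hdeg : P.natDegree ≤ p ^ (s - 1) := by
    refine natDegree_sum_le_of_forall_le _ _ fun i hi => ?_
    rw [natDegree_pow, natDegree_C_mul_X c hc, mul_one]
    exact Nat.pow_le_pow_right (by omega) (by simp at hi; omega)
  have hcoeff : P.coeff 1 = c := by
    simp only [P, finsetSum_coeff, mul_pow, ← C_pow, coeff_C_mul_X_pow]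
    rw [sum_eq_single_of_mem 0 (by simp [hs]) fun i _ hi => if_neg (Nat.one_lt_pow hi hp).ne]
    simp
  have hP : P = 0 := eq_zero_of_natDegree_lt_card_of_eval_eq_zero' P S
    (fun z hz => by simpa [P, eval_finsetSum] using h z hz) (hdeg.trans_lt hS)
  exact hc (by rw [← hcoeff, hP, coeff_zero])

theorem hammingNorm_subtype_comp {α β γ : Type*} [DecidableEq β] [Zero γ] [DecidableEq γ]
    (D : Finset α) {g : α → β} (hg : Function.Injective g) (f : β → γ) :
    hammingNorm (fun x : D => f (g x)) = #{y ∈ D.image g | f y ≠ 0} := by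
  rw [filter_image, card_image_of_injective _ hg, hammingNorm, univ_eq_attach,
    filter_attach (fun x => f (g x) ≠ 0), card_map, card_attach]

theorem card_filter_eq_zero_mul_card {K V : Type*} [Field K] [Fintype K] [DecidableEq K]
    [AddCommGroup V] [Module K V] [Fintype V] (W : Submodule K V) (f : V →ₗ[K] K)
    (hf : ∃ w ∈ W, f w ≠ 0) :
    #{v | v ∈ W ∧ f v = 0} * Fintype.card K = #{v | v ∈ W} := by
  have hf' : f.comp W.subtype ≠ 0 := by
    obtain ⟨w, hw, hfw⟩ := hf
    exact fun h => hfw (LinearMap.congr_fun h ⟨w, hw⟩)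
  have hker : Fintype.card {v // v ∈ W ∧ f v = 0} =
      Fintype.card (LinearMap.ker (f.comp W.subtype)) :=
    Fintype.card_congr (Equiv.subtypeSubtypeEquivSubtypeInter (· ∈ W) (f · = 0)).symm
  rw [← Fintype.card_subtype, ← Fintype.card_subtype, hker, card_eq_pow_finrank (K := K),
    card_eq_pow_finrank (K := K) (V := W), ← pow_succ,
    Module.Dual.finrank_ker_add_one_of_ne_zero hf']

theorem card_filter_add_pow_eq_zero {K : Type*} [Field K] [DecidableEq K] {n t : ℕ} (hn : 2 ≤ n)
    (ht : 0 < t) {ζ : K} (hζ : IsPrimitiveRoot ζ (n - 1)) {x : K} (hx : x ^ (n - 1) = -1)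
    {b : K} (hb : b ≠ 0) :
    #{y ∈ nthRootsFinset ((n - 1) * (2 * t)) b | y + y ^ n = 0} = if b = 1 then n - 1 else 0 := by
  have hk : 0 < (n - 1) * (2 * t) := Nat.mul_pos (by omega) (by omega)
  have hiff : ∀ y ∈ nthRootsFinset ((n - 1) * (2 * t)) b, y + y ^ n = 0 ↔ y ^ (n - 1) = -1 := by
    intro y hy
    have hy0 : y ≠ 0 := by
      rintro rfl
      rw [mem_nthRootsFinset hk, zero_pow hk.ne'] at hy
      exact hb hy.symm
    rw [← pow_sub_one_mul (by omega : n ≠ 0), ← one_add_mul, mul_eq_zero, or_iff_left hy0,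
      add_comm, add_eq_zero_iff_eq_neg]
  have hpow : ∀ y : K, y ^ (n - 1) = -1 → y ^ ((n - 1) * (2 * t)) = 1 := by
    intro y hy
    rw [pow_mul, hy, (even_two_mul t).neg_one_pow]
  split_ifs with hb1
  · subst hb1
    suffices h : {y ∈ nthRootsFinset ((n - 1) * (2 * t)) (1 : K) | y + y ^ n = 0} =
        nthRootsFinset (n - 1) (-1) by
      rw [h, hζ.card_nthRootsFinset_of_pow_eq hx (neg_ne_zero.2 one_ne_zero)]
    ext y
    rw [mem_filter, mem_nthRootsFinset (by omega : 0 < n - 1)]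
    constructor
    · rintro ⟨hy, hy0⟩
      exact (hiff y hy).1 hy0
    · intro hy
      have hyS : y ∈ nthRootsFinset ((n - 1) * (2 * t)) (1 : K) := by
        rw [mem_nthRootsFinset hk]
        exact hpow y hy
      exact ⟨hyS, (hiff y hyS).2 hy⟩
  · rw [card_eq_zero, filter_eq_empty_iff]
    intro y hy hy0
    exact hb1 (((mem_nthRootsFinset hk b).1 hy).symm.trans (hpow y ((hiff y hy).1 hy0)))

section Trace

variable {p : ℕ} [Fact p.Prime] {F : Type*} [Field F] [Fintype F] [Algebra (ZMod p) F]

theorem finrank_zmod_eq_of_card_eq_pow {m : ℕ} (hF : Fintype.card F = p ^ m) :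
    finrank (ZMod p) F = m := by
  rw [card_eq_pow_finrank (K := ZMod p), ZMod.card] at hF
  exact Nat.pow_right_injective (Fact.out : p.Prime).two_le hF

theorem algebraMap_trace_zmod_eq_sum_pow {m : ℕ} (hF : Fintype.card F = p ^ m) (x : F) :
    algebraMap (ZMod p) F (Algebra.trace (ZMod p) F x) = ∑ i ∈ range m, x ^ p ^ i := by
  rw [FiniteField.algebraMap_trace_eq_sum_pow, Nat.card_zmod, finrank_zmod_eq_of_card_eq_pow hF]

theorem algebraMap_trace_eq_nsmul_add_pow {s : ℕ} (hF : Fintype.card F = p ^ (2 * s)) {u : F}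
    (hu : u ^ (p + 1) = 1) :
    algebraMap (ZMod p) F (Algebra.trace (ZMod p) F u) = s • (u + u ^ p) := by
  have hp := (Fact.out : p.Prime).two_le
  have hu2 : u ^ p ^ 2 = u := by
    have : p ^ 2 = (p + 1) * (p - 1) + 1 := by
      zify [show 1 ≤ p by omega]; ring
    rw [this, pow_succ, pow_mul, hu, one_pow, one_mul]
  have hpow : ∀ j, u ^ p ^ (2 * j) = u := by
    intro j
    induction j with
    | zero => simp
    | succ j ih => rw [Nat.mul_succ, pow_add, pow_mul, ih, hu2]
  rw [algebraMap_trace_zmod_eq_sum_pow hF]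
  clear hF
  induction s with
  | zero => simp
  | succ s ih =>
    rw [Nat.mul_succ, sum_range_succ, sum_range_succ, ih, hpow, pow_succ, pow_mul, hpow,
      succ_nsmul]
    ring

variable [CharP F p]

theorem trace_eq_zero_iff_sq_eq_neg_one {s : ℕ} (hF : Fintype.card F = p ^ (2 * s))
    (hps : ¬ p ∣ s) {u : F} (hu : u ^ (p + 1) = 1) :
    Algebra.trace (ZMod p) F u = 0 ↔ u ^ 2 = -1 := by
  have hu0 : u ≠ 0 := by rintro rfl; simp at hu
  have hs : (s : F) ≠ 0 := by rwa [Ne, CharP.cast_eq_zero_iff F p]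
  have hmul : u * (u + u ^ p) = u ^ 2 + 1 := by rw [← hu]; ring
  rw [← (algebraMap (ZMod p) F).injective.eq_iff, map_zero,
    algebraMap_trace_eq_nsmul_add_pow hF hu, nsmul_eq_mul, mul_eq_zero, or_iff_right hs,
    ← mul_eq_zero_iff_left hu0, hmul, add_eq_zero_iff_eq_neg]

theorem trace_pow_eq_zero_iff {s d : ℕ} (hF : Fintype.card F = p ^ (2 * s)) (hps : ¬ p ∣ s)
    (hd : (p + 1) * d = p ^ (2 * s) - 1) {x : F} (hx : x ≠ 0) :
    Algebra.trace (ZMod p) F (x ^ d) = 0 ↔ x ^ (2 * d) = -1 := by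
  have hu : (x ^ d) ^ (p + 1) = 1 := by
    rw [← pow_mul, mul_comm, hd, ← hF, FiniteField.pow_card_sub_one_eq_one x hx]
  rw [trace_eq_zero_iff_sq_eq_neg_one hF hps hu, ← pow_mul, mul_comm]

theorem filter_trace_pow_eq_zero {s d : ℕ} (hF : Fintype.card F = p ^ (2 * s))
    (hps : ¬ p ∣ s) (hd : (p + 1) * d = p ^ (2 * s) - 1) :
    ({x | x ≠ 0 ∧ Algebra.trace (ZMod p) F (x ^ d) = 0} : Finset F) =
      nthRootsFinset (2 * d) (-1) := by
  have hd0 : 0 < 2 * d := by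
    have := Fintype.one_lt_card (α := F)
    rcases Nat.eq_zero_or_pos d with rfl | h <;> omega
  ext x
  rw [mem_filter_univ, mem_nthRootsFinset hd0]
  refine ⟨fun ⟨hx, htr⟩ => (trace_pow_eq_zero_iff hF hps hd hx).1 htr, fun hx => ?_⟩
  have hx0 : x ≠ 0 := by rintro rfl; simp [zero_pow hd0.ne'] at hx
  exact ⟨hx0, (trace_pow_eq_zero_iff hF hps hd hx0).2 hx⟩

theorem trace_zpow_neg_eq_zero_iff {s d δ : ℕ} (hF : Fintype.card F = p ^ (2 * s))
    (hps : ¬ p ∣ s) (hd : (p + 1) * d = p ^ (2 * s) - 1) {α a : F}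
    (hα : α ^ (p ^ (2 * s) - 1) = 1) (ha : ∃ j : ℕ, a = α ^ (δ + (p + 1) * j)) :
    Algebra.trace (ZMod p) F (α ^ (-((d * δ : ℕ) : ℤ))) = 0 ↔ a ^ (2 * d) = -1 := by
  rw [← hd] at hα
  have hu : ((α ^ (d * δ))⁻¹) ^ (p + 1) = 1 := by
    rw [inv_pow, ← pow_mul, show d * δ * (p + 1) = (p + 1) * d * δ by ring, pow_mul, hα,
      one_pow, inv_one]
  obtain ⟨j, rfl⟩ := ha
  rw [zpow_neg, zpow_natCast, trace_eq_zero_iff_sq_eq_neg_one hF hps hu, inv_pow,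
    inv_eq_iff_eq_inv, inv_neg, inv_one, ← pow_mul, ← pow_mul,
    show (δ + (p + 1) * j) * (2 * d) = d * δ * 2 + (p + 1) * d * (2 * j) by ring, pow_add,
    pow_mul α ((p + 1) * d), hα, one_pow, mul_one]

theorem algebraMap_trace_mul_eq_sum_pow {s : ℕ} (hF : Fintype.card F = p ^ (2 * s)) (y : F)
    {z : F} (hz : z ^ p ^ s = z) :
    algebraMap (ZMod p) F (Algebra.trace (ZMod p) F (y * z)) =
      ∑ i ∈ range s, ((y + y ^ p ^ s) * z) ^ p ^ i := by
  rw [algebraMap_trace_zmod_eq_sum_pow hF, two_mul, sum_range_add, ← sum_add_distrib]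
  refine sum_congr rfl fun i _ => ?_
  rw [pow_add, pow_mul, mul_pow y z (p ^ s), hz, ← add_pow_char_pow, add_mul]

end Trace

section FrobeniusPowFixed

variable {p : ℕ} [Fact p.Prime] {F : Type*} [Field F] [Algebra (ZMod p) F] [CharP F p]

variable (p) (F) in
def frobeniusPowFixed (s : ℕ) : Submodule (ZMod p) F where
  carrier := {z | z ^ p ^ s = z}
  add_mem' {x y} (hx : x ^ p ^ s = x) (hy : y ^ p ^ s = y) := by
    rw [Set.mem_ofPred_eq, add_pow_char_pow, hx, hy]
  zero_mem' := zero_pow (pow_ne_zero s (Fact.out : p.Prime).ne_zero)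
  smul_mem' c z (hz : z ^ p ^ s = z) := by
    rw [Set.mem_ofPred_eq, Algebra.smul_def, mul_pow, ← map_pow, ZMod.pow_card_pow, hz]

theorem mem_frobeniusPowFixed {s : ℕ} {z : F} : z ∈ frobeniusPowFixed p F s ↔ z ^ p ^ s = z :=
  Iff.rfl

variable [Fintype F]

theorem filter_mem_frobeniusPowFixed {s : ℕ} (hs : 0 < s) :
    ({z | z ∈ frobeniusPowFixed p F s} : Finset F) =
      insert 0 (nthRootsFinset (p ^ s - 1) (1 : F)) := by
  have hn : 1 < p ^ s := Nat.one_lt_pow hs.ne' (Fact.out : p.Prime).one_lt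
  ext z
  rcases eq_or_ne z 0 with rfl | hz
  · simp
  rw [mem_insert, or_iff_right hz, mem_nthRootsFinset (by omega), mem_filter_univ,
    mem_frobeniusPowFixed, ← pow_sub_one_mul (by omega : p ^ s ≠ 0), mul_eq_right₀ hz]

theorem card_frobeniusPowFixed {s : ℕ} (hs : 0 < s) {ζ : F}
    (hζ : IsPrimitiveRoot ζ (p ^ s - 1)) : #{z | z ∈ frobeniusPowFixed p F s} = p ^ s := by
  have hn : 1 < p ^ s := Nat.one_lt_pow hs.ne' (Fact.out : p.Prime).one_lt
  have h0 : (0 : F) ∉ nthRootsFinset (p ^ s - 1) (1 : F) := by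
    rw [mem_nthRootsFinset (by omega), zero_pow (by omega)]
    exact zero_ne_one
  rw [filter_mem_frobeniusPowFixed hs, card_insert_of_notMem h0,
    hζ.card_nthRootsFinset_of_pow_eq (one_pow _) one_ne_zero]
  omega

theorem card_filter_trace_mul_ne_zero {s : ℕ} (hF : Fintype.card F = p ^ (2 * s)) (hs : 0 < s)
    {ζ : F} (hζ : IsPrimitiveRoot ζ (p ^ s - 1)) {y : F} (hy : y + y ^ p ^ s ≠ 0) :
    #{z ∈ nthRootsFinset (p ^ s - 1) (1 : F) | Algebra.trace (ZMod p) F (z * y) ≠ 0} =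
      p ^ s - p ^ (s - 1) := by
  have hp := (Fact.out : p.Prime).one_lt
  have hR := card_frobeniusPowFixed hs hζ
  have hf : ∃ z ∈ frobeniusPowFixed p F s,
      ((Algebra.trace (ZMod p) F).comp (LinearMap.mulRight (ZMod p) y)) z ≠ 0 := by
    obtain ⟨z, hz, hne⟩ := exists_sum_pow_mul_ne_zero hp hs hy
      (hR ▸ Nat.pow_lt_pow_right hp (show s - 1 < s by omega))
    rw [mem_filter_univ] at hz
    refine ⟨z, hz, fun h0 => hne ?_⟩
    rw [← algebraMap_trace_mul_eq_sum_pow hF y hz, mul_comm,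
      show Algebra.trace (ZMod p) F (z * y) = 0 from h0, map_zero]
  have hker : #{z | z ∈ frobeniusPowFixed p F s ∧ Algebra.trace (ZMod p) F (z * y) = 0} * p =
      p ^ s := by
    have := card_filter_eq_zero_mul_card _ _ hf
    rw [ZMod.card, hR] at this
    exact this
  have hsplit := card_filter_add_card_filter_not (s := {z | z ∈ frobeniusPowFixed p F s})
    (fun z => Algebra.trace (ZMod p) F (z * y) ≠ 0)
  simp only [filter_filter, not_not, hR] at hsplit
  have hZ : {z ∈ nthRootsFinset (p ^ s - 1) (1 : F) | Algebra.trace (ZMod p) F (z * y) ≠ 0} =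
      ({z | z ∈ frobeniusPowFixed p F s ∧ Algebra.trace (ZMod p) F (z * y) ≠ 0} : Finset F) := by
    rw [← filter_filter, filter_mem_frobeniusPowFixed hs, filter_insert]
    simp
  have hps : p ^ s = p ^ (s - 1) * p := by rw [← pow_succ, Nat.sub_add_cancel hs]
  have := Nat.eq_of_mul_eq_mul_right (by omega) (hker.trans hps)
  rw [hZ]
  omega

end FrobeniusPowFixed

section Weights

variable {p : ℕ} [Fact p.Prime] {F : Type*} [Field F] [Fintype F] [Algebra (ZMod p) F]
  [CharP F p]

theorem card_mul_card_filter_trace_ne_zero {s k : ℕ} (hF : Fintype.card F = p ^ (2 * s))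
    (hs : 0 < s) {ζ : F} (hζ : IsPrimitiveRoot ζ (p ^ s - 1)) (hk : p ^ s - 1 ∣ k) (hk0 : 0 < k)
    (b : F) :
    (p ^ s - 1) * #{y ∈ nthRootsFinset k b | Algebra.trace (ZMod p) F y ≠ 0} =
      #{y ∈ nthRootsFinset k b | y + y ^ p ^ s ≠ 0} * (p ^ s - p ^ (s - 1)) := by
  have hn : 1 < p ^ s := Nat.one_lt_pow hs.ne' (Fact.out : p.Prime).one_lt
  have hZ : ∀ z ∈ nthRootsFinset (p ^ s - 1) (1 : F), z ≠ 0 ∧ z ^ p ^ s = z ∧ z ^ k = 1 := by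
    intro z hz
    rw [mem_nthRootsFinset (by omega)] at hz
    obtain ⟨j, rfl⟩ := hk
    refine ⟨by rintro rfl; simp [zero_pow (by omega : p ^ s - 1 ≠ 0)] at hz, ?_, ?_⟩
    · rw [← pow_sub_one_mul (by omega : p ^ s ≠ 0), hz, one_mul]
    · rw [pow_mul, hz, one_pow]
  have key := sum_card_bipartiteAbove_eq_sum_card_bipartiteBelow
    (fun z y => Algebra.trace (ZMod p) F (z * y) ≠ 0)
    (s := nthRootsFinset (p ^ s - 1) (1 : F)) (t := nthRootsFinset k b)
  have hleft : ∀ z ∈ nthRootsFinset (p ^ s - 1) (1 : F),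
      #{y ∈ nthRootsFinset k b | Algebra.trace (ZMod p) F (z * y) ≠ 0} =
        #{y ∈ nthRootsFinset k b | Algebra.trace (ZMod p) F y ≠ 0} := by
    intro z hz
    obtain ⟨hz0, -, hzk⟩ := hZ z hz
    have h := congrArg card (filter_image (f := (z * ·)) (s := nthRootsFinset k b)
      (p := fun y => Algebra.trace (ZMod p) F y ≠ 0))
    rw [image_mul_nthRootsFinset hk0 hz0, hzk, one_mul,
      card_image_of_injective _ (mul_right_injective₀ hz0)] at h
    exact h.symm
  have hright : ∀ y ∈ nthRootsFinset k b,
      #{z ∈ nthRootsFinset (p ^ s - 1) (1 : F) | Algebra.trace (ZMod p) F (z * y) ≠ 0} =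
        if y + y ^ p ^ s ≠ 0 then p ^ s - p ^ (s - 1) else 0 := by
    intro y _
    split_ifs with hy
    · exact card_filter_trace_mul_ne_zero hF hs hζ hy
    · rw [card_eq_zero, filter_eq_empty_iff]
      intro z hz
      rw [not_not, ← (algebraMap (ZMod p) F).injective.eq_iff, mul_comm,
        algebraMap_trace_mul_eq_sum_pow hF y (hZ z hz).2.1, not_not.1 hy]
      simp [zero_pow (pow_ne_zero _ (Fact.out : p.Prime).ne_zero)]
  simp only [bipartiteAbove, bipartiteBelow] at key
  rw [sum_congr rfl hleft, sum_congr rfl hright, sum_const, sum_ite, sum_const_zero, add_zero,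
    sum_const, smul_eq_mul, smul_eq_mul, hζ.card_nthRootsFinset_of_pow_eq (one_pow _) one_ne_zero]
    at key
  exact key

theorem card_filter_trace_ne_zero {s t : ℕ} (hF : Fintype.card F = p ^ (2 * s)) (hs : 0 < s)
    (hp : Odd p) {α : F} (hα : IsPrimitiveRoot α (p ^ (2 * s) - 1))
    (ht : (p + 1) * t = p ^ s + 1) {x b : F} (hx : x ^ ((p ^ s - 1) * (2 * t)) = b)
    (hb : b ≠ 0) :
    #{y ∈ nthRootsFinset ((p ^ s - 1) * (2 * t)) b | Algebra.trace (ZMod p) F y ≠ 0} =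
      (if b = 1 then 2 * t - 1 else 2 * t) * (p ^ s - p ^ (s - 1)) := by
  have hn : 1 < p ^ s := Nat.one_lt_pow hs.ne' (Fact.out : p.Prime).one_lt
  have ht0 : 0 < t := by rcases Nat.eq_zero_or_pos t with rfl | h <;> omega
  have hq : p ^ (2 * s) - 1 = (p ^ s + 1) * (p ^ s - 1) := by
    rw [mul_comm 2 s, pow_mul, sq, mul_self_tsub_one]
  have hq0 : 0 < p ^ (2 * s) - 1 := by rw [hq]; exact Nat.mul_pos (by omega) (by omega)
  obtain ⟨m, hm⟩ := (hp.pow (n := s)).add_one.two_dvd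
  obtain ⟨r, hr⟩ := hp.add_one.two_dvd
  have hζ : IsPrimitiveRoot (α ^ (p ^ s + 1)) (p ^ s - 1) := hα.pow hq0 hq
  have hS : IsPrimitiveRoot (α ^ r) ((p ^ s - 1) * (2 * t)) :=
    hα.pow hq0 (by rw [hq, ← ht, hr]; ring)
  have hneg : (α ^ m) ^ (p ^ s - 1) = -1 := by
    rw [← pow_mul]
    exact (hα.pow hq0 (by rw [hq, hm]; ring)).eq_neg_one_of_two_right
  have hmain := card_mul_card_filter_trace_ne_zero hF hs hζ (dvd_mul_right _ (2 * t))
    (Nat.mul_pos (by omega) (by omega)) b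
  have hsplit : #{y ∈ nthRootsFinset ((p ^ s - 1) * (2 * t)) b | y + y ^ p ^ s = 0} +
      #{y ∈ nthRootsFinset ((p ^ s - 1) * (2 * t)) b | y + y ^ p ^ s ≠ 0} =
      #(nthRootsFinset ((p ^ s - 1) * (2 * t)) b) :=
    card_filter_add_card_filter_not _
  rw [card_filter_add_pow_eq_zero hn ht0 hζ hneg hb, hS.card_nthRootsFinset_of_pow_eq hx hb]
    at hsplit
  refine Nat.eq_of_mul_eq_mul_left (by omega : 0 < p ^ s - 1) (hmain.trans ?_)
  split_ifs at hsplit ⊢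
  · rw [show #{y ∈ nthRootsFinset ((p ^ s - 1) * (2 * t)) b | y + y ^ p ^ s ≠ 0} =
      (p ^ s - 1) * (2 * t - 1) by rw [Nat.mul_sub_one]; omega]
    ring
  · rw [zero_add] at hsplit
    rw [hsplit]
    ring

theorem hammingNorm_trace_mul {s t d : ℕ} (hF : Fintype.card F = p ^ (2 * s)) (hs : 0 < s)
    (hp : 4 ∣ p + 1) {α : F} (hα : IsPrimitiveRoot α (p ^ (2 * s) - 1))
    (ht : (p + 1) * t = p ^ s + 1) (hd : d = (p ^ s - 1) * t) {a : F} (ha : a ≠ 0) :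
    hammingNorm (fun x : nthRootsFinset (2 * d) (-1 : F) => Algebra.trace (ZMod p) F (a * x)) =
      (if a ^ (2 * d) = -1 then 2 * t - 1 else 2 * t) * (p ^ s - p ^ (s - 1)) := by
  obtain ⟨r, hr⟩ := hp
  have hn : 1 < p ^ s := Nat.one_lt_pow hs.ne' (Fact.out : p.Prime).one_lt
  have ht0 : 0 < t := Nat.pos_of_ne_zero (by rintro rfl; omega)
  have h2d : 2 * d = (p ^ s - 1) * (2 * t) := by rw [hd]; ring
  have h2d0 : 0 < 2 * d := by rw [h2d]; exact Nat.mul_pos (by omega) (by omega)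
  have hq : p ^ (2 * s) - 1 = r * (2 * d) * 2 := by
    rw [pow_two_mul_sub_one_eq_mul ht, ← hd, hr]; ring
  have hneg : (α ^ r) ^ (2 * d) = -1 := by
    rw [← pow_mul]
    exact (hα.pow (by rw [hq]; exact Nat.mul_pos (Nat.mul_pos (by omega) h2d0) two_pos) hq
      ).eq_neg_one_of_two_right
  rw [hammingNorm_subtype_comp _ (mul_right_injective₀ ha),
    image_mul_nthRootsFinset h2d0 ha, mul_neg_one, ← neg_eq_iff_eq_neg]
  rw [h2d] at hneg ⊢
  exact card_filter_trace_ne_zero hF hs (Nat.odd_iff.2 (by omega)) hα ht (x := α ^ r * a)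
    (by rw [mul_pow, hneg, neg_one_mul]) (neg_ne_zero.2 (pow_ne_zero _ ha))

end Weights

theorem codeword_weights_p_three_mod_four_general
    (p m s : ℕ) (hp : p.Prime) (h4 : p % 4 = 3)
    (hm : m = 2 * s) (hs : Odd s) (hs0 : 0 < s) (hmp : Nat.gcd m p = 1)
    (q d : ℕ) (hq : q = p ^ m) (hd : d = (q - 1) / (p + 1))
    (F : Type*) [Field F] [Fintype F] [Algebra (ZMod p) F]
    (hF : Fintype.card F = q)
    (α : F) (hα : orderOf α = q - 1)
    (D : Finset F)
    (hD : D = Finset.univ.filter fun x : F =>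
      x ≠ 0 ∧ Algebra.trace (ZMod p) F (x ^ d) = 0)
    (a : F) (ha0 : a ≠ 0) (δ : ℕ)
    (haδ : ∃ j : ℕ, a = α ^ (δ + (p + 1) * j)) :
    (Algebra.trace (ZMod p) F (α ^ (-((d * δ : ℕ) : ℤ))) = 0 →
      hammingNorm (fun x : D => Algebra.trace (ZMod p) F (a * (x : F))) =
        p ^ (s - 1) * (2 * p ^ s - p + 1) * (p - 1) / (p + 1)) ∧
    (Algebra.trace (ZMod p) F (α ^ (-((d * δ : ℕ) : ℤ))) ≠ 0 →
      hammingNorm (fun x : D => Algebra.trace (ZMod p) F (a * (x : F))) =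
        2 * p ^ (s - 1) * (p ^ s + 1) * (p - 1) / (p + 1)) := by
  have : Fact p.Prime := ⟨hp⟩
  have : CharP F p := charP_of_injective_algebraMap (algebraMap (ZMod p) F).injective p
  subst hm hq
  have hps : ¬ p ∣ s := fun h => hp.not_dvd_one (hmp ▸ Nat.dvd_gcd (h.mul_left 2) dvd_rfl)
  obtain ⟨t, ht⟩ : ∃ t, (p + 1) * t = p ^ s + 1 := by
    simpa [Dvd.dvd, eq_comm] using hs.nat_add_dvd_pow_add_pow p 1
  have hq := pow_two_mul_sub_one_eq_mul ht
  have hdt : d = (p ^ s - 1) * t := by rw [hd, hq, Nat.mul_div_cancel_left _ (Nat.succ_pos p)]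
  have hd1 : (p + 1) * d = p ^ (2 * s) - 1 := by rw [hdt, hq]
  have hα' : IsPrimitiveRoot α (p ^ (2 * s) - 1) := IsPrimitiveRoot.iff_orderOf.2 hα
  obtain rfl := hD.trans (filter_trace_pow_eq_zero hF hps hd1)
  rw [hammingNorm_trace_mul hF hs0 (by omega) hα' ht hdt ha0, ne_eq,
    trace_zpow_neg_eq_zero_iff hF hps hd1 hα'.pow_eq_one haδ]
  exact ⟨fun h => by rw [if_pos h, two_mul_sub_one_mul_sub_pow hp.pos hs0 ht],
    fun h => by rw [if_neg h, two_mul_mul_sub_pow hp.pos hs0 ht]⟩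

/-- for `p ≡ 3 (mod 4)`, `m = 2s` with `s` odd, `gcd(m,p) = 1`,
`q = p^m`, `d = (q-1)/(p+1)`, `α` a primitive element of `F_q` and
`D = {x ∈ F_q^* : Tr_{q/p}(x^d) = 0}`: if `a ∈ C_δ^{(p+1,q)}` with `0 ≤ δ ≤ p`,
then the Hamming weight of `c(a) = (Tr_{q/p}(a x))_{x ∈ D}` is
`p^{s-1}(2p^s - p + 1)(p-1)/(p+1)` when `Tr_{q/p}(α^{-dδ}) = 0`, and
`2 p^{s-1}(p^s + 1)(p-1)/(p+1)` when `Tr_{q/p}(α^{-dδ}) ≠ 0`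
(so `C_D` is a two-weight code). -/
theorem codeword_weights_p_three_mod_four
    (p m s : ℕ) (hp : p.Prime) (hodd : Odd p) (h4 : p % 4 = 3)
    (hm : m = 2 * s) (hs : Odd s) (hs0 : 0 < s) (hmp : Nat.gcd m p = 1)
    (q d : ℕ) (hq : q = p ^ m) (hd : d = (q - 1) / (p + 1))
    (F : Type*) [Field F] [Fintype F] [Algebra (ZMod p) F]
    (hF : Fintype.card F = q)
    (α : F) (hα : orderOf α = q - 1)
    (D : Finset F)
    (hD : D = Finset.univ.filter fun x : F =>
      x ≠ 0 ∧ Algebra.trace (ZMod p) F (x ^ d) = 0)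
    (a : F) (ha0 : a ≠ 0) (δ : ℕ) (hδ : δ ≤ p)
    (haδ : ∃ j : ℕ, a = α ^ (δ + (p + 1) * j)) :
    (Algebra.trace (ZMod p) F (α ^ (-((d * δ : ℕ) : ℤ))) = 0 →
      hammingNorm (fun x : D => Algebra.trace (ZMod p) F (a * (x : F))) =
        p ^ (s - 1) * (2 * p ^ s - p + 1) * (p - 1) / (p + 1)) ∧
    (Algebra.trace (ZMod p) F (α ^ (-((d * δ : ℕ) : ℤ))) ≠ 0 →
      hammingNorm (fun x : D => Algebra.trace (ZMod p) F (a * (x : F))) =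
        2 * p ^ (s - 1) * (p ^ s + 1) * (p - 1) / (p + 1)) :=
  codeword_weights_p_three_mod_four_general p m s hp h4 hm hs hs0 hmp q d hq hd F hF α hα D hD a ha0
    δ haδ
end

section
/- Let p be an odd prime, m = 2s a positive even integer with gcd(m,p) = 1, q = p^m, and α a primitive element of F_q. Then Σ_{y ∈ F_p^*} Σ_{i=0}^{p} ζ_p^{Tr_{q/p}(y·α^{(q−1)i/(p+1)})} = 2·η_0^{(2,p^2)}, where η_0^{(2,p^2)} is the Gaussian period of order 2 over F_{p^2} (relative to the primitive element β = α^{(q−1)/(p^2−1)} of F_{p^2}). -/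
-- The Gaussian period `η_i^{(N,q)} = ∑_{x ∈ C_i^{(N,q)}} χ(x)`, where
-- `C_i^{(N,q)} = α^i ⟨α^N⟩` is a cyclotomic class of order `N` w.r.t. the primitive element `α`.
open scoped Classical in
noncomputable def gaussPeriod (p : ℕ) (F : Type*) [Field F] [Fintype F] [Algebra (ZMod p) F]
    (α : F) (N i : ℕ) : ℂ :=
  ∑ x ∈ Finset.univ.filter (fun x : F => ∃ j : ℕ, x = α ^ (i + N * j)), canonChar p F x

open scoped Classical

open Finset

theorem ZMod.sum_val_eq_sum_range {M : Type*} [AddCommMonoid M] (n : ℕ) [NeZero n]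
    (g : ℕ → M) : ∑ t : ZMod n, g t.val = ∑ j ∈ range n, g j := by
  obtain ⟨m, rfl⟩ := Nat.exists_eq_succ_of_ne_zero (NeZero.ne n)
  exact Fin.sum_univ_eq_sum_range g (m + 1)

theorem AddMonoidHom.sum_comp_of_surjective {G H M : Type*} [AddGroup G] [Fintype G]
    [AddGroup H] [Fintype H] [AddCommMonoid M] (φ : G →+ H) (hφ : Function.Surjective φ)
    {c : ℕ} (hc : Fintype.card G = c * Fintype.card H) (f : H → M) :
    ∑ g, f (φ g) = c • ∑ h, f h := by
  have hfiber : ∀ h, #{g | φ g = h} = #{g | φ g = 0} := fun h =>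
    AddMonoidHom.card_fiber_eq_of_mem_range φ (hφ h) (hφ 0)
  have hcard : #{g | φ g = 0} = c := by
    have hsum := card_eq_sum_card_fiberwise (f := φ) (s := univ) (t := univ) fun _ _ => mem_univ _
    simp only [card_univ, hfiber, sum_const, smul_eq_mul] at hsum
    exact Nat.eq_of_mul_eq_mul_right Fintype.card_pos (by rw [← hc, hsum, mul_comm])
  rw [sum_comp, image_univ_of_surjective hφ, smul_sum]
  exact sum_congr rfl fun h _ => by rw [hfiber, hcard]

def ZMod.mulLeftHom {m N : ℕ} (a : ℕ) (h : N ∣ a * m) : ZMod m →+ ZMod N :=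
  ZMod.lift m ⟨(AddMonoidHom.mulLeft (a : ZMod N)).comp (Int.castAddHom (ZMod N)), by
    simpa [← Nat.cast_mul] using (ZMod.natCast_eq_zero_iff _ _).2 h⟩

theorem ZMod.mulLeftHom_intCast {m N : ℕ} (a : ℕ) (h : N ∣ a * m) (x : ℤ) :
    ZMod.mulLeftHom a h (x : ZMod m) = a * x :=
  ZMod.lift_coe _ _ x

theorem sum_sum_pow_mul_add_mul {G M : Type*} [Monoid G] [AddCommMonoid M] {γ : G}
    {n a b : ℕ} [NeZero n] [NeZero a] [NeZero b] (hab : a.Coprime b)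
    (hγ : orderOf γ = n * a * b) (f : G → M) :
    ∑ k ∈ range (n * b), ∑ i ∈ range (n * a), f (γ ^ (a * k + b * i)) =
      n • ∑ j ∈ range (n * a * b), f (γ ^ j) := by
  set N := n * a * b
  let Φ : ZMod (n * b) × ZMod (n * a) →+ ZMod N :=
    (ZMod.mulLeftHom a ⟨1, by ring⟩).coprod (ZMod.mulLeftHom b ⟨1, by ring⟩)
  have hΦ : ∀ x y : ℤ, Φ (x, y) = a * x + b * y := fun x y => by
    simp [Φ, ZMod.mulLeftHom_intCast]
  have hsurj : Function.Surjective Φ := by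
    obtain ⟨u, v, huv⟩ := Nat.isCoprime_iff_coprime.2 hab
    intro t
    refine ⟨((t.val * u : ℤ), (t.val * v : ℤ)), ?_⟩
    rw [hΦ]
    have hbezout := congrArg (fun z : ℤ => ((t.val * z : ℤ) : ZMod N)) huv
    simp only [Int.cast_mul, Int.cast_add, Int.cast_natCast, mul_one,
      ZMod.natCast_zmod_val] at hbezout ⊢
    linear_combination hbezout
  have hcard : Fintype.card (ZMod (n * b) × ZMod (n * a)) = n * Fintype.card (ZMod N) := by
    simp only [Fintype.card_prod, ZMod.card, N]; ring
  have hpow : ∀ k i : ℕ, γ ^ (a * k + b * i) = γ ^ (Φ (k, i)).val := fun k i => by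
    have hki := hΦ k i
    simp only [Int.cast_natCast] at hki
    rw [hki, ← Nat.cast_mul, ← Nat.cast_mul, ← Nat.cast_add, ZMod.val_natCast, ← hγ,
      pow_mod_orderOf]
  calc ∑ k ∈ range (n * b), ∑ i ∈ range (n * a), f (γ ^ (a * k + b * i))
      = ∑ x : ZMod (n * b) × ZMod (n * a), f (γ ^ (Φ x).val) := by
        simp only [← ZMod.sum_val_eq_sum_range, Fintype.sum_prod_type, hpow, ZMod.natCast_val,
          ZMod.cast_id', id]
    _ = n • ∑ t : ZMod N, f (γ ^ t.val) :=
        Φ.sum_comp_of_surjective hsurj hcard fun t => f (γ ^ t.val)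
    _ = n • ∑ j ∈ range N, f (γ ^ j) := by rw [ZMod.sum_val_eq_sum_range N fun j => f (γ ^ j)]

theorem IsPrimitiveRoot.sum_nthRootsFinset_one {R M : Type*} [CommRing R] [IsDomain R]
    [AddCommMonoid M] {ζ : R} {n : ℕ} (hζ : IsPrimitiveRoot ζ n) (g : R → M) :
    ∑ x ∈ Polynomial.nthRootsFinset n (1 : R), g x = ∑ k ∈ range n, g (ζ ^ k) := by
  rcases n.eq_zero_or_pos with rfl | hn
  · simp
  have hinj : Set.InjOn (ζ ^ ·) (range n) := by
    simpa [hζ.eq_orderOf, ← Nat.Iio_eq_range] using pow_injOn_Iio_orderOf (x := ζ)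
  have himage : (range n).image (ζ ^ ·) = Polynomial.nthRootsFinset n (1 : R) := by
    refine eq_of_subset_of_card_le (fun x hx => ?_) ?_
    · obtain ⟨k, -, rfl⟩ := mem_image.1 hx
      rw [Polynomial.mem_nthRootsFinset hn, ← pow_mul, mul_comm, pow_mul, hζ.pow_eq_one, one_pow]
    · rw [hζ.card_nthRootsFinset, card_image_of_injOn hinj, card_range]
  rw [← himage, sum_image hinj]

theorem sum_ne_zero_algebraMap_eq_sum_nthRootsFinset {K L M : Type*} [Field K] [Fintype K]
    [DecidableEq K] [CommRing L] [IsDomain L] [Algebra K L] [AddCommMonoid M] (g : L → M) :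
    ∑ y ∈ univ.filter (· ≠ (0 : K)), g (algebraMap K L y) =
      ∑ x ∈ Polynomial.nthRootsFinset (Fintype.card K - 1) (1 : L), g x := by
  have hinj : Set.InjOn (algebraMap K L) (univ.filter (· ≠ (0 : K))) :=
    (algebraMap K L).injective.injOn
  have hq : 0 < Fintype.card K - 1 := Nat.sub_pos_of_lt Fintype.one_lt_card
  have himage : (univ.filter (· ≠ (0 : K))).image (algebraMap K L) =
      Polynomial.nthRootsFinset (Fintype.card K - 1) (1 : L) := by
    refine eq_of_subset_of_card_le (fun x hx => ?_) ?_
    · obtain ⟨y, hy, rfl⟩ := mem_image.1 hx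
      rw [Polynomial.mem_nthRootsFinset hq, ← map_pow,
        FiniteField.pow_card_sub_one_eq_one y (mem_filter.1 hy).2, map_one]
    · rw [card_image_of_injOn hinj, filter_ne', card_erase_of_mem (mem_univ _), card_univ]
      exact (Multiset.toFinset_card_le _).trans (Polynomial.card_nthRoots _ _)
  rw [← himage, sum_image hinj]

theorem sum_ne_zero_comp_mul_left {K M : Type*} [GroupWithZero K] [Fintype K] [DecidableEq K]
    [AddCommMonoid M] {a : K} (ha : a ≠ 0) (g : K → M) :
    ∑ y ∈ univ.filter (· ≠ 0), g (a * y) = ∑ y ∈ univ.filter (· ≠ 0), g y :=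
  sum_nbij' (a * ·) (a⁻¹ * ·) (by simp [ha]) (by simp [ha]) (by simp [ha]) (by simp [ha])
    fun _ _ => rfl

theorem pow_two_mul_sub_one_div_add_one {p : ℕ} (hp : 1 < p) (s : ℕ) :
    (p ^ (2 * s) - 1) / (p + 1) = (p ^ (2 * s) - 1) / (p ^ 2 - 1) * (p - 1) := by
  obtain ⟨c, hc⟩ : p ^ 2 - 1 ∣ p ^ (2 * s) - 1 := by
    simpa [pow_mul] using Nat.sub_dvd_pow_sub_pow (p ^ 2) 1 s
  have hp2 : p ^ 2 - 1 = (p + 1) * (p - 1) := by simpa using Nat.sq_sub_sq p 1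
  rw [hc, Nat.mul_div_cancel_left _ (Nat.sub_pos_of_lt (Nat.one_lt_pow two_ne_zero hp)), hp2,
    mul_assoc, Nat.mul_div_cancel_left _ p.succ_pos, mul_comm]

theorem FiniteField.finrank_zmod_eq_of_card_eq_pow {p : ℕ} [Fact p.Prime] {K : Type*}
    [AddCommGroup K] [Fintype K] [Module (ZMod p) K] {n : ℕ} (h : Fintype.card K = p ^ n) :
    Module.finrank (ZMod p) K = n :=
  Nat.pow_right_injective (Fact.out : p.Prime).two_le ((pow_finrank_eq_card p K).trans h)

theorem Algebra.trace_algHom_apply {K E F : Type*} [Field K] [Field E] [Field F]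
    [Algebra K E] [Algebra K F] [FiniteDimensional K E] [FiniteDimensional K F]
    (ι : E →ₐ[K] F) {n : ℕ} (hn : Module.finrank K F = Module.finrank K E * n) (x : E) :
    Algebra.trace K F (ι x) = n • Algebra.trace K E x := by
  let _ : Algebra E F := ι.toRingHom.toAlgebra
  have _ : IsScalarTower K E F := .of_algebraMap_eq fun r => (ι.commutes r).symm
  have _ : Module.Finite E F := .of_restrictScalars_finite K E F
  have hEF : Module.finrank E F = n := by
    refine Nat.eq_of_mul_eq_mul_left (Module.finrank_pos (R := K) (M := E)) ?_
    rw [Module.finrank_mul_finrank, hn]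
  change Algebra.trace K F (algebraMap E F x) = _
  rw [← Algebra.trace_trace (S := E), Algebra.trace_algebraMap, hEF, map_nsmul]

theorem canonChar_algHom_apply {p : ℕ} {E F : Type*} [Field E] [Fintype E] [Algebra (ZMod p) E]
    [Field F] [Fintype F] [Algebra (ZMod p) F] [Fact p.Prime] (ι : E →ₐ[ZMod p] F) {n : ℕ}
    (hn : Module.finrank (ZMod p) F = Module.finrank (ZMod p) E * n) (x : E) :
    canonChar p F (ι x) = canonChar p E (n • x) := by
  rw [canonChar, canonChar, Algebra.trace_algHom_apply ι hn, map_nsmul]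

theorem gaussPeriod_eq_sum_range {p : ℕ} {F : Type*} [Field F] [Fintype F] [Algebra (ZMod p) F]
    {α : F} (hα : IsOfFinOrder α) (N i : ℕ) :
    gaussPeriod p F α N i = ∑ j ∈ range (orderOf (α ^ N)), canonChar p F (α ^ i * (α ^ N) ^ j) := by
  have hinj : Set.InjOn (fun j => α ^ i * (α ^ N) ^ j) (range (orderOf (α ^ N))) := by
    intro j hj k hk hjk
    refine pow_injOn_Iio_orderOf (by simpa using hj) (by simpa using hk)
      ((hα.isUnit.pow i).mul_left_cancel hjk)
  have hclass : univ.filter (fun x : F => ∃ j : ℕ, x = α ^ (i + N * j)) =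
      (range (orderOf (α ^ N))).image fun j => α ^ i * (α ^ N) ^ j := by
    ext x
    simp only [mem_filter, mem_univ, true_and, mem_image, mem_range, pow_add, pow_mul]
    constructor
    · rintro ⟨j, rfl⟩
      exact ⟨j % orderOf (α ^ N), Nat.mod_lt _ (hα.pow.orderOf_pos), by rw [pow_mod_orderOf]⟩
    · rintro ⟨j, -, rfl⟩
      exact ⟨j, rfl⟩
  rw [gaussPeriod, hclass, sum_image hinj]

theorem sum_ne_zero_mul_pow_sub_one_eq_two_nsmul_sum_sq {p : ℕ} [Fact p.Prime] (hodd : Odd p)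
    {E M : Type*} [Field E] [Algebra (ZMod p) E] [AddCommMonoid M] {β : E}
    (hβ : orderOf β = p ^ 2 - 1) (f : E → M) :
    ∑ y ∈ univ.filter (· ≠ (0 : ZMod p)), ∑ i ∈ range (p + 1),
        f (algebraMap (ZMod p) E y * β ^ ((p - 1) * i)) =
      2 • ∑ j ∈ range (orderOf (β ^ 2)), f ((β ^ 2) ^ j) := by
  obtain ⟨r, rfl⟩ := hodd
  have : NeZero r := ⟨by rintro rfl; exact Nat.not_prime_one Fact.out⟩
  have hβ2 : orderOf (β ^ 2) = 2 * (r + 1) * r := by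
    rw [orderOf_pow_of_dvd two_ne_zero ⟨2 * (r + 1) * r, by rw [hβ]; ring_nf; omega⟩, hβ]
    ring_nf; omega
  have hζ : IsPrimitiveRoot ((β ^ 2) ^ (r + 1)) (Fintype.card (ZMod (2 * r + 1)) - 1) := by
    have h := orderOf_pow_of_dvd (x := β ^ 2) (n := r + 1) (by omega) ⟨2 * r, by rw [hβ2]; ring⟩
    rw [hβ2, show 2 * (r + 1) * r = (r + 1) * (2 * r) by ring,
      Nat.mul_div_cancel_left _ r.succ_pos] at h
    rw [ZMod.card, Nat.add_sub_cancel, ← h]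
    exact IsPrimitiveRoot.orderOf _
  calc ∑ y ∈ univ.filter (· ≠ (0 : ZMod (2 * r + 1))), ∑ i ∈ range (2 * r + 1 + 1),
        f (algebraMap (ZMod (2 * r + 1)) E y * β ^ ((2 * r + 1 - 1) * i))
      = ∑ k ∈ range (2 * r), ∑ i ∈ range (2 * r + 1 + 1),
          f (((β ^ 2) ^ (r + 1)) ^ k * β ^ (2 * r * i)) := by
        rw [sum_ne_zero_algebraMap_eq_sum_nthRootsFinset
          (fun x => ∑ i ∈ range (2 * r + 1 + 1), f (x * β ^ ((2 * r + 1 - 1) * i))),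
          hζ.sum_nthRootsFinset_one, ZMod.card, Nat.add_sub_cancel]
    _ = ∑ k ∈ range (2 * r), ∑ i ∈ range (2 * (r + 1)), f ((β ^ 2) ^ ((r + 1) * k + r * i)) := by
        refine sum_congr rfl fun k _ => ?_
        rw [show 2 * r + 1 + 1 = 2 * (r + 1) by ring]
        refine sum_congr rfl fun i _ => ?_
        rw [← pow_mul, ← pow_mul, ← pow_mul, ← pow_add]
        ring_nf
    _ = 2 • ∑ j ∈ range (orderOf (β ^ 2)), f ((β ^ 2) ^ j) := by
        rw [hβ2]
        exact sum_sum_pow_mul_add_mul (by simp) hβ2 f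

theorem double_sum_eq_two_gauss_period_general
    (p m s : ℕ) [NeZero p] (hp : p.Prime) (hodd : Odd p) (hm : m = 2 * s)
    (hmp : Nat.gcd m p = 1)
    (F : Type*) [Field F] [Fintype F] [Algebra (ZMod p) F]
    (hF : Fintype.card F = p ^ m)
    (α : F)
    (E : Type*) [Field E] [Fintype E] [Algebra (ZMod p) E]
    (hE : Fintype.card E = p ^ 2)
    (β : E) (hβ : orderOf β = p ^ 2 - 1)
    (ι : E →ₐ[ZMod p] F) (hι : ι β = α ^ ((p ^ m - 1) / (p ^ 2 - 1))) :
    ∑ y ∈ Finset.univ.filter (fun y : ZMod p => y ≠ 0),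
      ∑ i ∈ Finset.range (p + 1),
        canonChar p F (algebraMap (ZMod p) F y * α ^ ((p ^ m - 1) / (p + 1) * i)) =
      2 * gaussPeriod p E β 2 0 := by
  have := Fact.mk hp
  have hα : ∀ i, α ^ ((p ^ m - 1) / (p + 1) * i) = ι (β ^ ((p - 1) * i)) := fun i => by
    rw [map_pow, hι, ← pow_mul, hm, pow_two_mul_sub_one_div_add_one hp.one_lt, mul_assoc]
  have hfinrank : Module.finrank (ZMod p) F = Module.finrank (ZMod p) E * s := by
    rw [FiniteField.finrank_zmod_eq_of_card_eq_pow hF,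
      FiniteField.finrank_zmod_eq_of_card_eq_pow hE, hm, mul_comm]
  have hs : (s : ZMod p) ≠ 0 := by
    rw [Ne, ZMod.natCast_eq_zero_iff, ← hp.coprime_iff_not_dvd]
    exact (Nat.Coprime.coprime_dvd_left (hm ▸ dvd_mul_left s 2) hmp).symm
  calc _ = ∑ y ∈ univ.filter (· ≠ (0 : ZMod p)), ∑ i ∈ range (p + 1),
          canonChar p E (algebraMap (ZMod p) E (s * y) * β ^ ((p - 1) * i)) := by
        refine sum_congr rfl fun y _ => sum_congr rfl fun i _ => ?_
        rw [hα, ← ι.commutes, ← map_mul, canonChar_algHom_apply ι hfinrank, nsmul_eq_mul,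
          map_mul, map_natCast, mul_assoc]
    _ = ∑ y ∈ univ.filter (· ≠ (0 : ZMod p)), ∑ i ∈ range (p + 1),
          canonChar p E (algebraMap (ZMod p) E y * β ^ ((p - 1) * i)) :=
        sum_ne_zero_comp_mul_left hs fun y => ∑ i ∈ range (p + 1),
          canonChar p E (algebraMap (ZMod p) E y * β ^ ((p - 1) * i))
    _ = 2 • ∑ j ∈ range (orderOf (β ^ 2)), canonChar p E ((β ^ 2) ^ j) :=
        sum_ne_zero_mul_pow_sub_one_eq_two_nsmul_sum_sq hodd hβ _
    _ = 2 * gaussPeriod p E β 2 0 := by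
        have hβ0 : 0 < orderOf β := hβ ▸ Nat.sub_pos_of_lt (Nat.one_lt_pow two_ne_zero hp.one_lt)
        rw [gaussPeriod_eq_sum_range (orderOf_pos_iff.1 hβ0), nsmul_eq_mul]
        simp

/-- for `q = p^m`, `m = 2s` even with `gcd(m,p) = 1`, `α` a primitive
element of `F_q`, and `β = α^{(q-1)/(p²-1)}` the corresponding primitive element of
the field `F_{p²}` (realized as a field `E` of cardinality `p²` embedded in `F_q`),
`∑_{y ∈ F_p^*} ∑_{i=0}^{p} ζ_p^{Tr_{q/p}(y α^{(q-1)i/(p+1)})} = 2 η_0^{(2,p²)}`. -/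
theorem double_sum_eq_two_gauss_period
    (p m s : ℕ) [NeZero p] (hp : p.Prime) (hodd : Odd p) (hm : m = 2 * s) (hs0 : 0 < s)
    (hmp : Nat.gcd m p = 1)
    (F : Type*) [Field F] [Fintype F] [Algebra (ZMod p) F]
    (hF : Fintype.card F = p ^ m)
    (α : F) (hα : orderOf α = p ^ m - 1)
    (E : Type*) [Field E] [Fintype E] [Algebra (ZMod p) E]
    (hE : Fintype.card E = p ^ 2)
    (β : E) (hβ : orderOf β = p ^ 2 - 1)
    (ι : E →ₐ[ZMod p] F) (hι : ι β = α ^ ((p ^ m - 1) / (p ^ 2 - 1))) :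
    ∑ y ∈ Finset.univ.filter (fun y : ZMod p => y ≠ 0),
      ∑ i ∈ Finset.range (p + 1),
        canonChar p F (algebraMap (ZMod p) F y * α ^ ((p ^ m - 1) / (p + 1) * i)) =
      2 * gaussPeriod p E β 2 0 :=
  double_sum_eq_two_gauss_period_general p m s hp hodd hm hmp F hF α E hE β hβ ι hι
end

section
/- Let p be an odd prime with p ≡ 3 (mod 4), m = 2s with s an odd positive integer and gcd(m,p) = 1, q = p^m, d = (q−1)/(p+1), α a primitive element of F_q, and δ_0 = (p+1)/4. Then Tr_{q/p}(α^{−d·δ_0}) = 0. -/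
/-- for `p ≡ 3 (mod 4)`, `m = 2s` with `s` odd, `gcd(m,p) = 1`,
`q = p^m`, `d = (q-1)/(p+1)`, `α` a primitive element of `F_q` and
`δ₀ = (p+1)/4`, we have `Tr_{q/p}(α^{-d δ₀}) = 0`. -/
theorem trace_alpha_neg_d_delta0_eq_zero
    (p m s : ℕ) (hp : p.Prime) (hodd : Odd p) (h4 : p % 4 = 3)
    (hm : m = 2 * s) (hs : Odd s) (hs0 : 0 < s) (hmp : Nat.gcd m p = 1)
    (q d δ₀ : ℕ) (hq : q = p ^ m) (hd : d = (q - 1) / (p + 1)) (hδ₀ : δ₀ = (p + 1) / 4)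
    (F : Type*) [Field F] [Fintype F] [Algebra (ZMod p) F]
    (hF : Fintype.card F = q)
    (α : F) (hα : orderOf α = q - 1) :
    Algebra.trace (ZMod p) F (α ^ (-((d * δ₀ : ℕ) : ℤ))) = 0 := by
  haveI : Fact p.Prime := ⟨hp⟩
  have hp3 : 3 ≤ p := by omega
  -- characteristic of F
  haveI hFp : CharP F p := charP_of_injective_algebraMap (algebraMap (ZMod p) F).injective p
  -- arithmetic facts
  have h4p : 4 ∣ p + 1 := by omega
  have hδ4 : 4 * δ₀ = p + 1 := by
    rw [hδ₀]; exact Nat.mul_div_cancel' h4p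
  have hq1 : 1 < q := by
    rw [hq]
    calc 1 < p := by omega
    _ ≤ p ^ m := Nat.le_self_pow (by omega) p
  have hpq : (p + 1) ∣ q - 1 := by
    have h1 : (p + 1) ∣ p ^ 2 - 1 := by
      have hle : 1 ≤ p ^ 2 := Nat.one_le_pow _ _ (by omega)
      zify [hle]
      exact ⟨(p : ℤ) - 1, by ring⟩
    have h2 : p ^ 2 - 1 ∣ q - 1 := by
      have : q = (p ^ 2) ^ s - 1 ^ s + 1 := by
        rw [hq, hm, pow_mul]; simp
        have : 1 ≤ (p ^ 2) ^ s := Nat.one_le_pow _ _ (by positivity)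
        omega
      rw [this]
      simpa using Nat.sub_dvd_pow_sub_pow (p ^ 2) 1 s
    exact h1.trans h2
  have hdm : (p + 1) * d = q - 1 := by
    rw [hd]; exact Nat.mul_div_cancel' hpq
  set N : ℕ := d * δ₀ with hN
  have h4N : 4 * N = q - 1 := by
    calc 4 * N = (4 * δ₀) * d := by rw [hN]; ring
    _ = q - 1 := by rw [hδ4, hdm]
  have hN0 : 0 < N := by omega
  obtain ⟨γ, hγ⟩ : ∃ γ : F, γ = α ^ N := ⟨_, rfl⟩
  have hγ4 : γ ^ 4 = 1 := by
    rw [hγ, ← pow_mul, mul_comm, h4N, ← hα, pow_orderOf_eq_one]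
  have hγ2 : γ ^ 2 = -1 := by
    have hsq : (γ ^ 2) * (γ ^ 2) = 1 := by rw [← pow_add]; exact hγ4
    rcases mul_self_eq_one_iff.mp hsq with h | h
    · exfalso
      rw [hγ, ← pow_mul] at h
      have := orderOf_dvd_of_pow_eq_one h
      rw [hα] at this
      have := Nat.le_of_dvd (by positivity) this
      omega
    · exact h
  -- Frobenius
  have hγp : γ ^ p = -γ := by
    obtain ⟨k, hk⟩ : ∃ k, p = 4 * k + 3 := ⟨p / 4, by omega⟩
    have hstep : γ ^ p = (γ ^ 4) ^ k * γ ^ 2 * γ := by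
      rw [hk]; ring
    rw [hstep, hγ4, hγ2]; ring
  have hgoal : α ^ (-((N : ℕ) : ℤ)) = γ⁻¹ := by rw [zpow_neg, zpow_natCast, hγ]
  rw [hgoal]
  set β : F := γ⁻¹ with hβ
  have hβp : β ^ p = -β := by
    rw [hβ, inv_pow, hγp, inv_neg]
  -- Frobenius as an algebra equivalence
  let f : F →ₐ[ZMod p] F :=
    { frobenius F p with
      commutes' := fun r => by
        simp only [frobenius_def, RingHom.toMonoidHom_eq_coe, OneHom.toFun_eq_coe,
          MonoidHom.toOneHom_coe, MonoidHom.coe_coe, RingHom.coe_coe]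
        rw [← map_pow, ZMod.pow_card] }
  let e : F ≃ₐ[ZMod p] F :=
    AlgEquiv.ofBijective f ((Finite.injective_iff_bijective).mp (frobenius F p).injective)
  have htr : Algebra.trace (ZMod p) F (e β) = Algebra.trace (ZMod p) F β :=
    Algebra.trace_eq_of_algEquiv e β
  have heβ : e β = -β := by
    show f β = -β
    show frobenius F p β = -β
    rw [frobenius_def, hβp]
  rw [heβ, map_neg] at htr
  have h2 : (2 : ZMod p) ≠ 0 := by
    have : ¬ (p : ℕ) ∣ 2 := by
      intro h; have := Nat.le_of_dvd (by norm_num) h; omega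
    have h := (ZMod.natCast_eq_zero_iff 2 p).not.mpr this
    simpa using h
  have : (2 : ZMod p) * Algebra.trace (ZMod p) F β = 0 := by linear_combination -htr
  exact (mul_eq_zero.mp this).resolve_left h2
end

section
/- Let p be an odd prime, m = 2s with s an odd positive integer, q = p^m, and d = (q−1)/(p+1). Then a^d = 1 for every a ∈ F_{p^s}^* (where F_{p^s} is viewed as a subfield of F_q). Consequently, for every x ∈ F_q^* with Tr_{q/p}(x^d) = 0 and every y ∈ F_{p^s}, one has Tr_{q/p}((xy)^d) = 0; i.e., the F_p-subspace x·F_{p^s} is contained in D ∪ {0}, where D = {z ∈ F_q^* : Tr_{q/p}(z^d) = 0}. -/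
lemma aux_d_eq (p s : ℕ) (hp : 2 ≤ p) (hs : Odd s) (hs0 : 0 < s) :
    ∃ k, 0 < k ∧ (p ^ (2 * s) - 1) / (p + 1) = (p ^ s - 1) * k := by
  -- p + 1 ∣ p ^ s + 1
  have hdvd : (p + 1) ∣ (p ^ s + 1) := by
    have : ((p : ℤ) + 1) ∣ ((p : ℤ) ^ s + 1) := by
      have h1 : ((p : ℤ) + 1) ∣ ((p : ℤ) ^ s - (-1) ^ s) := by
        simpa using sub_dvd_pow_sub_pow (p : ℤ) (-1) s
      rwa [hs.neg_one_pow, sub_neg_eq_add] at h1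
    exact_mod_cast this
  obtain ⟨k, hk⟩ := hdvd
  have hps1 : 1 ≤ p ^ s := Nat.one_le_pow _ _ (by omega)
  have hk0 : 0 < k := by
    rcases Nat.eq_zero_or_pos k with h | h
    · subst h; simp at hk
    · exact h
  refine ⟨k, hk0, ?_⟩
  have h2 : p ^ (2 * s) - 1 = (p + 1) * ((p ^ s - 1) * k) := by
    have hA : p ^ (2 * s) = p ^ s * p ^ s := by rw [two_mul, pow_add]
    have h3 : (p + 1) * ((p ^ s - 1) * k) = (p ^ s - 1) * ((p + 1) * k) := by ring
    rw [hA, h3, ← hk]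
    have h4 : 1 ≤ p ^ s * p ^ s := Nat.one_le_iff_ne_zero.2 (by positivity)
    zify [hps1, h4]
    ring
  rw [h2, Nat.mul_div_cancel_left _ (by omega)]

/-- for `m = 2s` with `s` odd, `q = p^m` and `d = (q-1)/(p+1)`,
every nonzero element of the subfield `F_{p^s} = {y ∈ F_q : y^{p^s} = y}` satisfies
`a^d = 1`. Consequently, if `x ∈ F_q^*` has `Tr_{q/p}(x^d) = 0`, then
`Tr_{q/p}((x y)^d) = 0` for every `y ∈ F_{p^s}`, i.e. the `F_p`-subspace
`x ⬝ F_{p^s}` is contained in `D ∪ {0}` where `D = {z ∈ F_q^* : Tr_{q/p}(z^d) = 0}`. -/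
theorem subfield_power_d_eq_one_and_subspace_in_D
    (p m s : ℕ) (hp : p.Prime) (hodd : Odd p)
    (hm : m = 2 * s) (hs : Odd s) (hs0 : 0 < s)
    (q d : ℕ) (hq : q = p ^ m) (hd : d = (q - 1) / (p + 1))
    (F : Type*) [Field F] [Fintype F] [Algebra (ZMod p) F]
    (hF : Fintype.card F = q) :
    (∀ a : F, a ≠ 0 → a ^ (p ^ s) = a → a ^ d = 1) ∧
    (∀ x : F, x ≠ 0 → Algebra.trace (ZMod p) F (x ^ d) = 0 →
      ∀ y : F, y ^ (p ^ s) = y →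
        Algebra.trace (ZMod p) F ((x * y) ^ d) = 0) := by
  obtain ⟨k, hk0, hdk⟩ := aux_d_eq p s hp.two_le hs hs0
  have hd' : d = (p ^ s - 1) * k := by rw [hd, hq, hm]; exact hdk
  have hps1 : 1 ≤ p ^ s := Nat.one_le_pow _ _ hp.pos
  have hps2 : 2 ≤ p ^ s := by
    calc 2 ≤ p := hp.two_le
    _ = p ^ 1 := (pow_one p).symm
    _ ≤ p ^ s := Nat.pow_le_pow_right hp.pos hs0
  have hd0 : 0 < d := by
    rw [hd']; exact Nat.mul_pos (by omega) hk0
  have key : ∀ a : F, a ≠ 0 → a ^ (p ^ s) = a → a ^ d = 1 := by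
    intro a ha hfix
    have h1 : a ^ (p ^ s - 1) = 1 := by
      have : a ^ (p ^ s - 1) * a = a := by
        rw [← pow_succ]
        rwa [Nat.sub_add_cancel hps1]
      field_simp at this
      exact this
    rw [hd', pow_mul, h1, one_pow]
  refine ⟨key, ?_⟩
  intro x hx htr y hy
  rcases eq_or_ne y 0 with rfl | hy0
  · rw [mul_zero, zero_pow hd0.ne', map_zero]
  · rw [mul_pow, key y hy0 hy, mul_one, htr]
end
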